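/- arXiv:1703.06549 — 7 statements merged into one kernel-verified Lean document; each statement's English description precedes it below -/
import Mathlib

section
/- For any finite abstract simplicial complex G with connection matrix L' = 1 + A' (where A'_{xy} = 1 if the distinct faces x and y intersect, and L'_{xx} = 1), the sum of all entries of the inverse matrix g = (L')^{-1} equals the Euler characteristic χ(G) = Σ_x (-1)^{dim(x)}. -/
open Finset Matrix

/-- The connection matrix `L' = 1 + A'` of a finite abstract simplicial complex `G`:
`L'_{xy} = 1` iff the faces `x` and `y` intersect (in particular `L'_{xx} = 1`). -/
def connMat {V : Type*} [DecidableEq V] (G : Finset (Finset V)) :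
    Matrix G G ℚ := fun x y =>
  if ((x : Finset V) ∩ (y : Finset V)).Nonempty then 1 else 0

/-- Euler characteristic `χ(G) = ∑_x (-1)^{dim x}` with `dim x = card x - 1`. -/
def eulerChar {V : Type*} [DecidableEq V] (G : Finset (Finset V)) : ℚ :=
  ∑ x ∈ G, (-1 : ℚ) ^ (x.card - 1)

section aux
variable {V : Type*} [DecidableEq V]

/-- `ω x = (-1)^{dim x}` -/
private def om (x : Finset V) : ℚ := (-1 : ℚ) ^ (x.card - 1)

omit [DecidableEq V] in
private lemma om_sq (x : Finset V) : om x * om x = 1 := by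
  unfold om
  rw [← mul_pow, neg_mul_neg, one_mul, one_pow]

private lemma sum_powerset_q (s : Finset V) :
    ∑ m ∈ s.powerset, (-1 : ℚ) ^ m.card = if s = ∅ then 1 else 0 := by
  have h := Finset.sum_powerset_neg_one_pow_card (x := s)
  have : ((∑ m ∈ s.powerset, (-1 : ℤ) ^ m.card : ℤ) : ℚ)
      = ∑ m ∈ s.powerset, (-1 : ℚ) ^ m.card := by push_cast; rfl
  rw [← this, h]
  split <;> norm_num

/-- Sum of `ω` over nonempty subsets of a nonempty set is `1`. -/
private lemma sum_om_nonempty_subsets (s : Finset V) (hs : s.Nonempty) :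
    ∑ y ∈ s.powerset.filter (fun y => y.Nonempty), om y = 1 := by
  have h0 : ∑ m ∈ s.powerset, (-1 : ℚ) ^ m.card = 0 := by
    rw [sum_powerset_q]; exact if_neg (Finset.nonempty_iff_ne_empty.mp hs)
  have hsplit : ∑ m ∈ s.powerset, (-1 : ℚ) ^ m.card
      = 1 + ∑ y ∈ s.powerset.filter (fun y => y.Nonempty), (-1 : ℚ) ^ y.card := by
    rw [← Finset.sum_filter_add_sum_filter_not s.powerset (fun y => y.Nonempty)]
    have h1 : s.powerset.filter (fun y => ¬ y.Nonempty) = {∅} := by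
      ext t
      simp only [Finset.mem_filter, Finset.mem_powerset, Finset.not_nonempty_iff_eq_empty,
        Finset.mem_singleton, and_iff_right_iff_imp]
      rintro rfl
      exact Finset.empty_subset s
    rw [add_comm, h1]
    simp
  have hneg : ∑ y ∈ s.powerset.filter (fun y => y.Nonempty), (-1 : ℚ) ^ y.card
      = - ∑ y ∈ s.powerset.filter (fun y => y.Nonempty), om y := by
    rw [← Finset.sum_neg_distrib]
    refine Finset.sum_congr rfl fun y hy => ?_
    have hyne : y.Nonempty := (Finset.mem_filter.mp hy).2
    obtain ⟨k, hk⟩ : ∃ k, y.card = k + 1 :=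
      ⟨y.card - 1, (Nat.succ_pred_eq_of_pos (Finset.card_pos.mpr hyne)).symm⟩
    unfold om
    rw [hk]
    simp [pow_succ]
  rw [hsplit, hneg] at h0
  linarith

/-- Key inner sum: over nonempty subsets of `z` that meet `x`. -/
private lemma knill_inner_sum (x z : Finset V) (hz : z.Nonempty) :
    ∑ y ∈ z.powerset.filter (fun y => y.Nonempty ∧ (y ∩ x).Nonempty), om y
      = if z ⊆ x then 1 else 0 := by
  have hsplit := Finset.sum_filter_add_sum_filter_not
    (z.powerset.filter (fun y => y.Nonempty)) (fun y => (y ∩ x).Nonempty) om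
  have h1 : (z.powerset.filter (fun y => y.Nonempty)).filter (fun y => (y ∩ x).Nonempty)
      = z.powerset.filter (fun y => y.Nonempty ∧ (y ∩ x).Nonempty) := by
    rw [Finset.filter_filter]
  have h2 : (z.powerset.filter (fun y => y.Nonempty)).filter (fun y => ¬ (y ∩ x).Nonempty)
      = (z \ x).powerset.filter (fun y => y.Nonempty) := by
    ext y
    simp only [Finset.mem_filter, Finset.mem_powerset, Finset.not_nonempty_iff_eq_empty,
      ← Finset.disjoint_iff_inter_eq_empty, Finset.subset_sdiff]
    tauto
  rw [h1, h2, sum_om_nonempty_subsets z hz] at hsplit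
  by_cases hzx : z ⊆ x
  · have he : z \ x = ∅ := Finset.sdiff_eq_empty_iff_subset.mpr hzx
    rw [he] at hsplit
    simp only [Finset.powerset_empty] at hsplit
    have h3 : ({∅} : Finset (Finset V)).filter (fun y => y.Nonempty) = ∅ := by
      ext t
      simp [Finset.not_nonempty_iff_eq_empty]
    rw [h3, Finset.sum_empty] at hsplit
    rw [if_pos hzx]
    linarith
  · have hzs : (z \ x).Nonempty := by
      rw [Finset.sdiff_nonempty]; exact hzx
    rw [sum_om_nonempty_subsets _ hzs] at hsplit
    rw [if_neg hzx]
    linarith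

/-- Interval sum: over `z` with `w ⊆ z ⊆ x`. -/
private lemma knill_interval_sum (w x : Finset V) (hw : w.Nonempty) (hwx : w ⊆ x) :
    ∑ z ∈ x.powerset.filter (fun z => w ⊆ z), om z
      = if x = w then om w else 0 := by
  have hre : ∑ z ∈ x.powerset.filter (fun z => w ⊆ z), om z
      = ∑ t ∈ (x \ w).powerset, om (w ∪ t) := by
    refine Finset.sum_nbij' (fun z => z \ w) (fun t => w ∪ t) ?_ ?_ ?_ ?_ ?_
    · intro z hz
      simp only [Finset.mem_filter, Finset.mem_powerset] at hz ⊢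
      exact Finset.sdiff_subset_sdiff hz.1 le_rfl
    · intro t ht
      simp only [Finset.mem_powerset] at ht
      simp only [Finset.mem_filter, Finset.mem_powerset]
      exact ⟨Finset.union_subset hwx (ht.trans Finset.sdiff_subset), Finset.subset_union_left⟩
    · intro z hz
      simp only [Finset.mem_filter, Finset.mem_powerset] at hz
      exact Finset.union_sdiff_of_subset hz.2
    · intro t ht
      simp only [Finset.mem_powerset] at ht
      exact Finset.union_sdiff_cancel_left (Finset.sdiff_disjoint.mono_left ht).symm
    · intro z hz
      simp only [Finset.mem_filter, Finset.mem_powerset] at hz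
      rw [Finset.union_sdiff_of_subset hz.2]
  rw [hre]
  have hcard : ∀ t ∈ (x \ w).powerset, om (w ∪ t) = om w * (-1 : ℚ) ^ t.card := by
    intro t ht
    simp only [Finset.mem_powerset] at ht
    have hdisj : Disjoint w t := (Finset.sdiff_disjoint.mono_left ht).symm
    have hc : (w ∪ t).card = w.card + t.card := Finset.card_union_of_disjoint hdisj
    obtain ⟨k, hk⟩ : ∃ k, w.card = k + 1 :=
      ⟨w.card - 1, (Nat.succ_pred_eq_of_pos (Finset.card_pos.mpr hw)).symm⟩
    unfold om
    rw [hc, hk]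
    have h5 : k + 1 + t.card - 1 = k + t.card := by omega
    rw [h5, Nat.add_sub_cancel, pow_add]
  rw [Finset.sum_congr rfl hcard, ← Finset.mul_sum, sum_powerset_q]
  have hiff : x \ w = ∅ ↔ x = w := by
    rw [Finset.sdiff_eq_empty_iff_subset]
    exact ⟨fun h => Finset.Subset.antisymm h hwx, fun h => h ▸ Finset.Subset.refl x⟩
  by_cases hxw : x = w
  · rw [if_pos (hiff.mpr hxw), if_pos hxw, mul_one]
  · rw [if_neg (fun h => hxw (hiff.mp h)), if_neg hxw, mul_zero]

end aux

/-- the sum of all entries of `g = (L')⁻¹` equals `χ(G)`. -/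
theorem sum_green_entries_eq_eulerChar {V : Type*} [DecidableEq V]
    (G : Finset (Finset V))
    (hne : ∀ x ∈ G, x.Nonempty)
    (hsub : ∀ x ∈ G, ∀ y : Finset V, y ⊆ x → y.Nonempty → y ∈ G)
    (hinv : IsUnit (connMat G)) :
    ∑ x : G, ∑ y : G, (connMat G)⁻¹ x y = eulerChar G := by
  classical
  set M : Matrix G G ℚ := fun x y =>
    om (x : Finset V) * om (y : Finset V) *
      ∑ z ∈ G, if (x : Finset V) ∪ (y : Finset V) ⊆ z then om z else 0 with hM
  -- inner sum over G
  have hGinner : ∀ z ∈ G, ∀ x : Finset V,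
      (∑ y ∈ G, if y ⊆ z ∧ (x ∩ y).Nonempty then om y else 0)
        = if z ⊆ x then 1 else 0 := by
    intro z hzG x
    rw [← Finset.sum_filter]
    have hfe : G.filter (fun y => y ⊆ z ∧ (x ∩ y).Nonempty)
        = z.powerset.filter (fun y => y.Nonempty ∧ (y ∩ x).Nonempty) := by
      ext y
      simp only [Finset.mem_filter, Finset.mem_powerset]
      constructor
      · rintro ⟨hyG, hyz, hyx⟩
        exact ⟨hyz, hne y hyG, by rwa [Finset.inter_comm]⟩
      · rintro ⟨hyz, hyne, hyx⟩
        exact ⟨hsub z hzG y hyz hyne, hyz, by rwa [Finset.inter_comm]⟩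
    rw [hfe]
    exact knill_inner_sum x z (hne z hzG)
  -- full-subset sum over G
  have hG1 : ∀ z ∈ G, (∑ y ∈ G, if y ⊆ z then om y else 0) = 1 := by
    intro z hzG
    rw [← Finset.sum_filter]
    have hfe : G.filter (fun y => y ⊆ z) = z.powerset.filter (fun y => y.Nonempty) := by
      ext y
      simp only [Finset.mem_filter, Finset.mem_powerset]
      exact ⟨fun ⟨hyG, hyz⟩ => ⟨hyz, hne y hyG⟩,
        fun ⟨hyz, hyne⟩ => ⟨hsub z hzG y hyz hyne, hyz⟩⟩
    rw [hfe]
    exact sum_om_nonempty_subsets z (hne z hzG)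
  -- interval sum over G
  have hGint : ∀ w ∈ G, ∀ x ∈ G, w ⊆ x →
      (∑ z ∈ G, if w ⊆ z ∧ z ⊆ x then om z else 0) = if x = w then om w else 0 := by
    intro w hwG x hxG hwx
    rw [← Finset.sum_filter]
    have hfe : G.filter (fun z => w ⊆ z ∧ z ⊆ x) = x.powerset.filter (fun z => w ⊆ z) := by
      ext z
      simp only [Finset.mem_filter, Finset.mem_powerset]
      exact ⟨fun ⟨_, hwz, hzx⟩ => ⟨hzx, hwz⟩,
        fun ⟨hzx, hwz⟩ => ⟨hsub x hxG z hzx ((hne w hwG).mono hwz), hwz, hzx⟩⟩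
    rw [hfe]
    exact knill_interval_sum w x (hne w hwG) hwx
  -- M is a right inverse of connMat G
  have hright : connMat G * M = 1 := by
    ext x w
    rw [Matrix.mul_apply, Matrix.one_apply]
    calc ∑ y : G, connMat G x y * M y w
        = ∑ y ∈ G, ((if ((x : Finset V) ∩ y).Nonempty then (1:ℚ) else 0) *
            (om y * om (w : Finset V) *
              ∑ z ∈ G, if y ∪ (w : Finset V) ⊆ z then om z else 0)) :=
          Finset.sum_coe_sort G (fun y => (if ((x : Finset V) ∩ y).Nonempty then (1:ℚ) else 0) *
            (om y * om (w : Finset V) *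
              ∑ z ∈ G, if y ∪ (w : Finset V) ⊆ z then om z else 0))
      _ = ∑ y ∈ G, ∑ z ∈ G,
            (if (w : Finset V) ⊆ z ∧ y ⊆ z ∧ ((x : Finset V) ∩ y).Nonempty
              then om (w : Finset V) * (om z * om y) else 0) := by
          refine Finset.sum_congr rfl fun y hy => ?_
          rw [Finset.mul_sum, Finset.mul_sum]
          refine Finset.sum_congr rfl fun z hz => ?_
          by_cases h1 : ((x : Finset V) ∩ y).Nonempty <;>
            by_cases h2 : (w : Finset V) ⊆ z <;>
            by_cases h3 : y ⊆ z <;>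
            simp [h1, h2, h3, Finset.union_subset_iff] <;> ring
      _ = ∑ z ∈ G, ∑ y ∈ G,
            (if (w : Finset V) ⊆ z ∧ y ⊆ z ∧ ((x : Finset V) ∩ y).Nonempty
              then om (w : Finset V) * (om z * om y) else 0) := Finset.sum_comm
      _ = ∑ z ∈ G, (if (w : Finset V) ⊆ z ∧ z ⊆ (x : Finset V)
              then om (w : Finset V) * om z else 0) := by
          refine Finset.sum_congr rfl fun z hz => ?_
          by_cases h2 : (w : Finset V) ⊆ z
          · have : ∑ y ∈ G,
                (if (w : Finset V) ⊆ z ∧ y ⊆ z ∧ ((x : Finset V) ∩ y).Nonempty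
                  then om (w : Finset V) * (om z * om y) else 0)
                = om (w : Finset V) * om z *
                  ∑ y ∈ G, (if y ⊆ z ∧ ((x : Finset V) ∩ y).Nonempty then om y else 0) := by
              rw [Finset.mul_sum]
              refine Finset.sum_congr rfl fun y hy => ?_
              by_cases h3 : y ⊆ z ∧ ((x : Finset V) ∩ y).Nonempty <;>
                simp [h2, h3] <;> ring
            rw [this, hGinner z hz]
            by_cases h4 : z ⊆ (x : Finset V) <;> simp [h2, h4]
          · have : ∀ y ∈ G,
                (if (w : Finset V) ⊆ z ∧ y ⊆ z ∧ ((x : Finset V) ∩ y).Nonempty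
                  then om (w : Finset V) * (om z * om y) else 0) = 0 := by
              intro y hy; rw [if_neg (fun h => h2 h.1)]
            rw [Finset.sum_congr rfl this, Finset.sum_const_zero, if_neg (fun h => h2 h.1)]
      _ = if x = w then 1 else 0 := by
          have hpull : ∑ z ∈ G, (if (w : Finset V) ⊆ z ∧ z ⊆ (x : Finset V)
              then om (w : Finset V) * om z else 0)
              = om (w : Finset V) *
                ∑ z ∈ G, (if (w : Finset V) ⊆ z ∧ z ⊆ (x : Finset V) then om z else 0) := by
            rw [Finset.mul_sum]
            refine Finset.sum_congr rfl fun z hz => ?_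
            by_cases h : (w : Finset V) ⊆ z ∧ z ⊆ (x : Finset V) <;> simp [h]
          rw [hpull]
          by_cases hwx : (w : Finset V) ⊆ (x : Finset V)
          · rw [hGint w w.2 x x.2 hwx]
            by_cases hxw : (x : Finset V) = (w : Finset V)
            · rw [if_pos hxw, if_pos (Subtype.ext hxw), om_sq]
            · rw [if_neg hxw, if_neg (fun h => hxw (congrArg _ h)), mul_zero]
          · have hz0 : ∀ z ∈ G,
                (if (w : Finset V) ⊆ z ∧ z ⊆ (x : Finset V) then om z else 0) = 0 := by
              intro z hz
              exact if_neg (fun h => hwx (h.1.trans h.2))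
            rw [Finset.sum_congr rfl hz0, Finset.sum_const_zero, mul_zero,
              if_neg (fun h => hwx (by rw [h]))]
  have hMinv : (connMat G)⁻¹ = M := Matrix.inv_eq_right_inv hright
  rw [hMinv]
  -- total sum
  calc ∑ x : G, ∑ y : G, M x y
      = ∑ x ∈ G, ∑ y ∈ G, (om x * om y * ∑ z ∈ G, if x ∪ y ⊆ z then om z else 0) := by
        have h1 : ∀ x : G, ∑ y : G, M x y
            = ∑ y ∈ G, (om (x : Finset V) * om y *
                ∑ z ∈ G, if (x : Finset V) ∪ y ⊆ z then om z else 0) :=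
          fun x => Finset.sum_coe_sort G (fun y => om (x : Finset V) * om y *
                ∑ z ∈ G, if (x : Finset V) ∪ y ⊆ z then om z else 0)
        rw [Finset.sum_congr rfl (fun x _ => h1 x)]
        exact Finset.sum_coe_sort G (fun x => ∑ y ∈ G, (om x * om y *
                ∑ z ∈ G, if x ∪ y ⊆ z then om z else 0))
    _ = ∑ x ∈ G, ∑ y ∈ G, ∑ z ∈ G,
          (if x ⊆ z ∧ y ⊆ z then om z * om x * om y else 0) := by
        refine Finset.sum_congr rfl fun x hx => Finset.sum_congr rfl fun y hy => ?_
        rw [Finset.mul_sum]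
        refine Finset.sum_congr rfl fun z hz => ?_
        by_cases h1 : x ⊆ z <;> by_cases h2 : y ⊆ z <;>
          simp [h1, h2, Finset.union_subset_iff] <;> ring
    _ = ∑ z ∈ G, ∑ x ∈ G, ∑ y ∈ G,
          (if x ⊆ z ∧ y ⊆ z then om z * om x * om y else 0) := by
        rw [Finset.sum_congr rfl (fun x (_ : x ∈ G) => Finset.sum_comm (s := G) (t := G)
          (f := fun y z => if x ⊆ z ∧ y ⊆ z then om z * om x * om y else 0))]
        exact Finset.sum_comm
    _ = ∑ z ∈ G, om z := by
        refine Finset.sum_congr rfl fun z hz => ?_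
        have hxstep : ∀ x ∈ G, ∑ y ∈ G, (if x ⊆ z ∧ y ⊆ z then om z * om x * om y else 0)
            = (if x ⊆ z then om x else 0) * om z := by
          intro x hx
          by_cases h1 : x ⊆ z
          · have : ∀ y ∈ G, (if x ⊆ z ∧ y ⊆ z then om z * om x * om y else 0)
                = om z * om x * (if y ⊆ z then om y else 0) := by
              intro y hy
              by_cases h2 : y ⊆ z <;> simp [h1, h2]
            rw [Finset.sum_congr rfl this, ← Finset.mul_sum, hG1 z hz, mul_one, if_pos h1]
            ring
          · have : ∀ y ∈ G, (if x ⊆ z ∧ y ⊆ z then om z * om x * om y else 0) = 0 := by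
              intro y hy; exact if_neg (fun h => h1 h.1)
            rw [Finset.sum_congr rfl this, Finset.sum_const_zero, if_neg h1, zero_mul]
        rw [Finset.sum_congr rfl hxstep, ← Finset.sum_mul, hG1 z hz, one_mul]
    _ = eulerChar G := rfl
end

section
/- For any finite abstract simplicial complex G, the connection matrix L' = 1 + A' applied to the vector K⁺ with K⁺(x) = (-1)^{dim(x)}(1 - χ(S(x))) gives the constant vector 1; equivalently, Σ_y g(x,y) = (-1)^{dim(x)} g(x,x) for every face x, where g = (L')^{-1}. -/
open Finset Matrix

/-- The Euler characteristic of the clique complex of the graph on the collection `S`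
of faces in which two faces are adjacent iff one strictly contains the other:
cliques are the nonempty chains in `S`. -/
def chainChi {V : Type*} [DecidableEq V] (S : Finset (Finset V)) : ℚ :=
  ∑ c ∈ S.powerset.filter
      (fun c => c.Nonempty ∧ ∀ y ∈ c, ∀ z ∈ c, y ⊆ z ∨ z ⊆ y),
    (-1 : ℚ) ^ (c.card - 1)

/-- The Euler characteristic of the unit sphere `S(x)` of the face `x` in the
barycentric refinement graph `G₁` (neighbors of `x`: faces comparable to `x`). -/
def sphereChi {V : Type*} [DecidableEq V] (G : Finset (Finset V)) (x : Finset V) : ℚ :=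
  chainChi (G.filter (fun y => y ⊂ x ∨ x ⊂ y))

/-- The unstable curvature `K⁺(x) = (-1)^{dim x} (1 - χ(S(x)))`. -/
def Kplus {V : Type*} [DecidableEq V] (G : Finset (Finset V)) (x : Finset V) : ℚ :=
  (-1 : ℚ) ^ (x.card - 1) * (1 - sphereChi G x)

/-!
Write `ω` for the diagonal matrix `ω(x) = (-1)^{dim x}` and `ζ` for the zeta matrix of `⊆` on `G`.
The unit sphere `S(x)` is the join of the faces below `x`, which form the open interval `(∅, x)`
of the Boolean lattice, and the faces above `x`, whose chains with top `m` are chains of `(x, m)`.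
By Hall's theorem these chain counts are Möbius values `±1` of the Boolean lattice, and
`1 - χ(S(x))` comes out as `K⁺ = ω ζ ω 𝟙`. Inclusion–exclusion over the faces of each `z` gives
`L' ω ζ = ζᵀ`, while `ζᵀ ω 𝟙 = 𝟙` is the Euler characteristic of a simplex. Hence `L' K⁺ = 𝟙`,
`(L')⁻¹ = ω ζ ω ζᵀ ω` by Möbius inversion on the Boolean lattice, and the row sums of `(L')⁻¹`
are `ω ζ ω 𝟙 = K⁺`, whose entries are `ω(x) g(x,x)`.
-/

lemma neg_one_pow_card_sub_one {α R : Type*} [Ring R] {s : Finset α} (hs : s.Nonempty) :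
    (-1 : R) ^ (#s - 1) = -(-1) ^ #s := by
  obtain ⟨k, hk⟩ := Nat.exists_eq_add_one.2 hs.card_pos
  rw [hk, Nat.add_sub_cancel, pow_succ, mul_neg_one, neg_neg]

lemma neg_one_pow_mul_neg_one_pow_self {R : Type*} [Monoid R] [HasDistribNeg R] (n : ℕ) :
    (-1 : R) ^ n * (-1) ^ n = 1 := by
  rw [← pow_add, ← two_mul, pow_mul, neg_one_sq, one_pow]

lemma sum_mul_sum_filter_comm {ι κ R : Type*} [CommSemiring R] (s : Finset ι) (t : Finset κ)
    (r : ι → κ → Prop) [∀ y z, Decidable (r y z)] (f : ι → R) (h : κ → R) :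
    ∑ y ∈ s, f y * ∑ z ∈ t with r y z, h z = ∑ z ∈ t, (∑ y ∈ s with r y z, f y) * h z := by
  simp only [sum_filter, mul_sum, sum_mul]
  rw [sum_comm]
  refine sum_congr rfl fun z _ => sum_congr rfl fun y _ => ?_
  split_ifs <;> simp

section Chains

variable {α : Type*} [PartialOrder α] [DecidableLE α]

def chains (A : Finset α) : Finset (Finset α) :=
  {c ∈ A.powerset | ∀ x ∈ c, ∀ y ∈ c, x ≤ y ∨ y ≤ x}

/-- Minus the reduced Euler characteristic of the order complex of `A`; the empty chain
contributes `1`. -/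
def altChainSum (A : Finset α) : ℚ :=
  ∑ c ∈ chains A, (-1) ^ #c

lemma mem_chains {A c : Finset α} :
    c ∈ chains A ↔ c ⊆ A ∧ ∀ x ∈ c, ∀ y ∈ c, x ≤ y ∨ y ≤ x := by
  simp [chains]

variable [DecidableEq α]

/-- The order complex of `A ∪ B` is the join of those of `A` and `B`. -/
lemma altChainSum_union {A B : Finset α} (h : ∀ a ∈ A, ∀ b ∈ B, a < b) :
    altChainSum (A ∪ B) = altChainSum A * altChainSum B := by
  have hAB : Disjoint A B := disjoint_left.2 fun x hA hB => lt_irrefl x (h x hA x hB)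
  rw [altChainSum, altChainSum, altChainSum, sum_mul_sum, ← sum_product']
  refine sum_nbij' (fun c => (c ∩ A, c ∩ B)) (fun p => p.1 ∪ p.2) ?_ ?_ ?_ ?_ ?_
  · intro c hc
    obtain ⟨-, hch⟩ := mem_chains.1 hc
    simp only [mem_product, mem_chains, mem_inter]
    exact ⟨⟨inter_subset_right, fun x hx y hy => hch x hx.1 y hy.1⟩,
      inter_subset_right, fun x hx y hy => hch x hx.1 y hy.1⟩
  · rintro ⟨a, b⟩ hp
    simp only [mem_product, mem_chains] at hp
    obtain ⟨⟨haA, ha⟩, hbB, hb⟩ := hp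
    refine mem_chains.2 ⟨union_subset_union haA hbB, ?_⟩
    simp only [mem_union]
    rintro x (hx | hx) y (hy | hy)
    exacts [ha x hx y hy, Or.inl (h x (haA hx) y (hbB hy)).le,
      Or.inr (h y (haA hy) x (hbB hx)).le, hb x hx y hy]
  · intro c hc
    rw [← inter_union_distrib_left, inter_eq_left.2 (mem_chains.1 hc).1]
  · rintro ⟨a, b⟩ hp
    simp only [mem_product, mem_chains] at hp
    have hbA : b ∩ A = ∅ := disjoint_iff_inter_eq_empty.1 (hAB.symm.mono_left hp.2.1)
    have haB : a ∩ B = ∅ := disjoint_iff_inter_eq_empty.1 (hAB.mono_left hp.1.1)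
    simp [union_inter_distrib_right, inter_eq_left.2 hp.1.1, inter_eq_left.2 hp.2.1, hbA, haB]
  · intro c hc
    rw [← pow_add, ← card_union_of_disjoint (hAB.mono inter_subset_right inter_subset_right),
      ← inter_union_distrib_left, inter_eq_left.2 (mem_chains.1 hc).1]

variable [DecidableLT α]

lemma insert_mem_chains {A c : Finset α} {m : α} (hm : m ∈ A)
    (hc : c ∈ chains {x ∈ A | x < m}) : insert m c ∈ chains A := by
  simp only [mem_chains, Finset.subset_iff, mem_filter] at hc
  obtain ⟨hcA, hc⟩ := hc
  refine mem_chains.2 ⟨insert_subset hm fun x hx => (hcA hx).1, ?_⟩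
  simp only [mem_insert]
  rintro x (rfl | hx) y (rfl | hy)
  exacts [Or.inl le_rfl, Or.inr (hcA hy).2.le, Or.inl (hcA hx).2.le, hc x hx y hy]

lemma exists_erase_mem_chains {A c : Finset α} (hc : c ∈ chains A) (hne : c.Nonempty) :
    ∃ m ∈ c, m ∈ A ∧ c.erase m ∈ chains {x ∈ A | x < m} := by
  obtain ⟨hcA, hch⟩ := mem_chains.1 hc
  obtain ⟨m, hmc, hmax⟩ := exists_maximal hne
  refine ⟨m, hmc, hcA hmc, mem_chains.2 ⟨fun x hx => ?_, fun x hx y hy =>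
    hch x (mem_of_mem_erase hx) y (mem_of_mem_erase hy)⟩⟩
  obtain ⟨hxm, hxc⟩ := mem_erase.1 hx
  refine mem_filter.2 ⟨hcA hxc, lt_of_le_of_ne ?_ hxm⟩
  exact (hch x hxc m hmc).elim id (hmax hxc)

/-- Splitting off the top element of each nonempty chain. -/
lemma altChainSum_eq_one_sub_sum (A : Finset α) :
    altChainSum A = 1 - ∑ m ∈ A, altChainSum {x ∈ A | x < m} := by
  have hnotMem : ∀ p ∈ A.sigma fun m => chains {x ∈ A | x < m}, p.1 ∉ p.2 := fun p hp h =>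
    lt_irrefl p.1 (mem_filter.1 ((mem_chains.1 (mem_sigma.1 hp).2).1 h)).2
  have htop : ∑ p ∈ A.sigma fun m => chains {x ∈ A | x < m}, (-1 : ℚ) ^ #(insert p.1 p.2)
      = ∑ c ∈ (chains A).erase ∅, (-1) ^ #c := by
    refine sum_bij (fun p _ => insert p.1 p.2) (fun p hp => ?_) (fun p hp p' hp' h => ?_)
      (fun c hc => ?_) (fun _ _ => rfl)
    · obtain ⟨hm, hc⟩ := mem_sigma.1 hp
      exact mem_erase.2 ⟨insert_ne_empty _ _, insert_mem_chains hm hc⟩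
    · have hle : ∀ q ∈ A.sigma (fun m => chains {x ∈ A | x < m}), ∀ x ∈ insert q.1 q.2,
          x ≤ q.1 := fun q hq x hx => (mem_insert.1 hx).elim le_of_eq fun hx =>
        (mem_filter.1 ((mem_chains.1 (mem_sigma.1 hq).2).1 hx)).2.le
      have hm : p.1 = p'.1 := le_antisymm (hle p' hp' _ (h ▸ mem_insert_self _ _))
        (hle p hp _ (h ▸ mem_insert_self _ _))
      have hc : p.2 = p'.2 := by
        rw [← erase_insert (hnotMem p hp), ← erase_insert (hnotMem p' hp'), h, hm]
      exact Sigma.ext hm (heq_of_eq hc)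
    · obtain ⟨hc0, hc⟩ := mem_erase.1 hc
      obtain ⟨m, hmc, hm, hc'⟩ := exists_erase_mem_chains hc (nonempty_iff_ne_empty.2 hc0)
      exact ⟨⟨m, c.erase m⟩, mem_sigma.2 ⟨hm, hc'⟩, insert_erase hmc⟩
  have hsign : ∀ p ∈ A.sigma fun m => chains {x ∈ A | x < m},
      (-1 : ℚ) ^ #(insert p.1 p.2) = -(-1) ^ #p.2 := fun p hp => by
    rw [card_insert_of_notMem (hnotMem p hp), pow_succ, mul_neg_one]
  rw [altChainSum, ← add_sum_erase _ _ (mem_chains.2 ⟨empty_subset A, by simp⟩), ← htop,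
    sum_congr rfl hsign, sum_neg_distrib, sum_sigma, card_empty, pow_zero, sub_eq_add_neg]
  rfl

end Chains

section Powerset

variable {α R : Type*} [DecidableEq α] [Ring R]

lemma sum_powerset_neg_one_pow_card_eq_ite (s : Finset α) :
    ∑ t ∈ s.powerset, (-1 : R) ^ #t = if s = ∅ then 1 else 0 := by
  have h := congrArg (Int.cast : ℤ → R) (sum_powerset_neg_one_pow_card (x := s))
  push_cast at h
  exact h

lemma sum_Icc_neg_one_pow_card (s t : Finset α) :
    ∑ u ∈ Icc s t, (-1 : R) ^ #u = if s = t then (-1) ^ #s else 0 := by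
  by_cases hst : s ⊆ t
  · have hinj : Set.InjOn (s ∪ ·) ((t \ s).powerset : Set (Finset α)) := by
      intro u hu v hv huv
      simp only [coe_powerset, Set.mem_preimage, Set.mem_powerset_iff, coe_subset] at hu hv
      calc u = (s ∪ u) \ s :=
            (union_sdiff_cancel_left (disjoint_of_subset_right hu disjoint_sdiff)).symm
        _ = (s ∪ v) \ s := congrArg (· \ s) huv
        _ = v := union_sdiff_cancel_left (disjoint_of_subset_right hv disjoint_sdiff)
    have hcard : ∀ u ∈ (t \ s).powerset, (-1 : R) ^ #(s ∪ u) = (-1) ^ #s * (-1) ^ #u := by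
      intro u hu
      rw [card_union_of_disjoint (disjoint_of_subset_right (mem_powerset.1 hu) disjoint_sdiff),
        pow_add]
    rw [Icc_eq_image_powerset hst, sum_image hinj, sum_congr rfl hcard, ← mul_sum,
      sum_powerset_neg_one_pow_card_eq_ite]
    simp only [sdiff_eq_empty_iff_subset]
    by_cases hts : t ⊆ s
    · rw [if_pos hts, if_pos (hst.antisymm hts), mul_one]
    · rw [if_neg hts, if_neg fun h => hts h.ge, mul_zero]
  · rw [Icc_eq_empty hst, sum_empty, if_neg fun h => hst h.le]

/-- Hall's theorem on the Boolean lattice: this is `-μ(s, t)`. -/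
lemma altChainSum_Ioo {s t : Finset α} (hst : s ⊂ t) :
    altChainSum (Ioo s t) = -((-1) ^ #s * (-1) ^ #t) := by
  induction t using Finset.strongInduction with
  | H t ih =>
    have hbelow : ∀ m ∈ Ioo s t,
        altChainSum {x ∈ Ioo s t | x < m} = -((-1) ^ #s * (-1) ^ #m) := by
      intro m hm
      obtain ⟨hsm, hmt⟩ := mem_Ioo.1 hm
      have hIoo : {x ∈ Ioo s t | x < m} = Ioo s m := by
        ext x
        simp only [mem_filter, mem_Ioo]
        exact ⟨fun h => ⟨h.1.1, h.2⟩, fun h => ⟨⟨h.1, h.2.trans hmt⟩, h.2⟩⟩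
      rw [hIoo, ih m hmt hsm]
    have hIcc := sum_Icc_neg_one_pow_card (R := ℚ) s t
    rw [if_neg hst.ne, Icc_eq_cons_Ioc hst.le, sum_cons, Ioc_eq_cons_Ioo hst, sum_cons] at hIcc
    rw [altChainSum_eq_one_sub_sum, sum_congr rfl hbelow, sum_neg_distrib, ← mul_sum]
    linear_combination (-1 : ℚ) ^ #s * hIcc - neg_one_pow_mul_neg_one_pow_self (R := ℚ) #s

end Powerset

structure IsSimplicialComplex {V : Type*} (G : Finset (Finset V)) : Prop where
  nonempty : ∀ x ∈ G, x.Nonempty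
  mem_of_subset : ∀ x ∈ G, ∀ y : Finset V, y ⊆ x → y.Nonempty → y ∈ G

section SimplicialComplex

variable {V : Type*} [DecidableEq V] {G : Finset (Finset V)}

lemma chainChi_eq_one_sub_altChainSum (S : Finset (Finset V)) :
    chainChi S = 1 - altChainSum S := by
  have hsplit := sum_filter_add_sum_filter_not (chains S) Finset.Nonempty fun c => (-1 : ℚ) ^ #c
  have hempty : {c ∈ chains S | ¬c.Nonempty} = {∅} := by
    ext c
    simp only [mem_filter, mem_singleton, not_nonempty_iff_eq_empty]
    exact ⟨And.right, fun h => ⟨h ▸ by simp [mem_chains], h⟩⟩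
  have hchains : {c ∈ S.powerset | c.Nonempty ∧ ∀ y ∈ c, ∀ z ∈ c, y ⊆ z ∨ z ⊆ y}
      = {c ∈ chains S | c.Nonempty} := by
    ext c
    simp only [chains, mem_filter]
    tauto
  rw [hempty, sum_singleton, card_empty, pow_zero] at hsplit
  rw [chainChi, hchains, altChainSum, ← hsplit,
    sum_congr rfl fun c hc => neg_one_pow_card_sub_one (mem_filter.1 hc).2, sum_neg_distrib]
  ring

lemma sum_connMat_mul (x : G) (f : Finset V → ℚ) :
    ∑ y : G, connMat G x y * f y = ∑ y ∈ G with ((x : Finset V) ∩ y).Nonempty, f y := by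
  rw [sum_filter, ← sum_coe_sort G]
  refine sum_congr rfl fun y _ => ?_
  simp only [connMat, ite_mul, one_mul, zero_mul]

variable (G) in
/-- Knill's formula `g(x,y) = ω(x) ω(y) χ(St(x) ∩ St(y))` for the entries of `(L')⁻¹`, where
`ω(x) = (-1)^{dim x}` and the star `St(x)` is the set of faces containing `x`. -/
def green (x y : Finset V) : ℚ :=
  (-1) ^ (#x - 1) * (-1) ^ (#y - 1) * ∑ z ∈ G with x ⊆ z ∧ y ⊆ z, (-1) ^ (#z - 1)

lemma green_comm (x y : Finset V) : green G x y = green G y x := by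
  simp only [green, and_comm, mul_comm ((-1 : ℚ) ^ (#x - 1))]

lemma green_eq_mul_sum_superset (x y : Finset V) :
    green G x y = (-1) ^ (#y - 1) * ((-1) ^ (#x - 1) *
      ∑ z ∈ G with x ⊆ z, if y ⊆ z then (-1) ^ (#z - 1) else 0) := by
  rw [green, ← sum_filter, filter_filter]
  ring

namespace IsSimplicialComplex

lemma altChainSum_filter_ssubset (hG : IsSimplicialComplex G) {y : Finset V} (hy : y ∈ G) :
    altChainSum {w ∈ G | w ⊂ y} = -(-1) ^ #y := by
  have hIoo : {w ∈ G | w ⊂ y} = Ioo ∅ y := by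
    ext w
    simp only [mem_filter, mem_Ioo, empty_ssubset]
    exact ⟨fun h => ⟨hG.nonempty w h.1, h.2⟩,
      fun h => ⟨hG.mem_of_subset y hy w h.2.subset h.1, h.2⟩⟩
  rw [hIoo, altChainSum_Ioo (empty_ssubset.2 (hG.nonempty y hy)), card_empty, pow_zero, one_mul]

lemma altChainSum_filter_ssuperset (hG : IsSimplicialComplex G) {y : Finset V} (hy : y ∈ G) :
    altChainSum {w ∈ G | y ⊂ w} = (-1) ^ #y * ∑ z ∈ G with y ⊆ z, (-1) ^ #z := by
  have hIoo : ∀ m ∈ {w ∈ G | y ⊂ w}, {x ∈ {w ∈ G | y ⊂ w} | x < m} = Ioo y m := by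
    intro m hm
    ext x
    simp only [mem_filter, mem_Ioo] at hm ⊢
    refine ⟨fun h => ⟨h.1.2, h.2⟩, fun h => ⟨⟨?_, h.1⟩, h.2⟩⟩
    exact hG.mem_of_subset m hm.1 x h.2.le ((hG.nonempty y hy).mono h.1.le)
  have hinsert : {z ∈ G | y ⊆ z} = insert y {w ∈ G | y ⊂ w} := by
    ext z
    simp only [mem_filter, mem_insert]
    constructor
    · rintro ⟨hz, hyz⟩
      rcases eq_or_ssubset_of_subset hyz with rfl | h
      exacts [Or.inl rfl, Or.inr ⟨hz, h⟩]
    · rintro (rfl | ⟨hz, h⟩)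
      exacts [⟨hy, subset_rfl⟩, ⟨hz, h.subset⟩]
  have hy' : y ∉ {w ∈ G | y ⊂ w} := fun h => (mem_filter.1 h).2.ne rfl
  rw [altChainSum_eq_one_sub_sum, sum_congr rfl fun m hm => by rw [hIoo m hm,
    altChainSum_Ioo (mem_filter.1 hm).2], hinsert, sum_insert hy', sum_neg_distrib, ← mul_sum]
  linear_combination -neg_one_pow_mul_neg_one_pow_self (R := ℚ) #y

lemma altChainSum_sphere (hG : IsSimplicialComplex G) {y : Finset V} (hy : y ∈ G) :
    altChainSum {w ∈ G | w ⊂ y ∨ y ⊂ w} = -∑ z ∈ G with y ⊆ z, (-1) ^ #z := by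
  have hjoin : ∀ a ∈ {w ∈ G | w ⊂ y}, ∀ b ∈ {w ∈ G | y ⊂ w}, a < b :=
    fun a ha b hb => (mem_filter.1 ha).2.trans (mem_filter.1 hb).2
  rw [filter_or, altChainSum_union hjoin, hG.altChainSum_filter_ssubset hy,
    hG.altChainSum_filter_ssuperset hy]
  linear_combination -(∑ z ∈ G with y ⊆ z, (-1 : ℚ) ^ #z) *
    neg_one_pow_mul_neg_one_pow_self (R := ℚ) #y

lemma Kplus_eq (hG : IsSimplicialComplex G) {y : Finset V} (hy : y ∈ G) :
    Kplus G y = (-1) ^ (#y - 1) * ∑ z ∈ G with y ⊆ z, (-1) ^ (#z - 1) := by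
  rw [Kplus, sphereChi, chainChi_eq_one_sub_altChainSum, sub_sub_cancel, hG.altChainSum_sphere hy,
    ← sum_neg_distrib]
  congr 1
  exact sum_congr rfl fun z hz => (neg_one_pow_card_sub_one
    ((hG.nonempty y hy).mono (mem_filter.1 hz).2)).symm

lemma sum_inter_nonempty_subset (hG : IsSimplicialComplex G) {z : Finset V} (hz : z ∈ G)
    (x : Finset V) :
    ∑ y ∈ G with (x ∩ y).Nonempty ∧ y ⊆ z, (-1 : ℚ) ^ (#y - 1) = if z ⊆ x then 1 else 0 := by
  have hmeets : {y ∈ G | (x ∩ y).Nonempty ∧ y ⊆ z} = {y ∈ z.powerset | (x ∩ y).Nonempty} := by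
    ext y
    simp only [mem_filter, mem_powerset]
    exact ⟨fun h => ⟨h.2.2, h.2.1⟩, fun h =>
      ⟨hG.mem_of_subset z hz y h.1 (h.2.mono inter_subset_right), h.2, h.1⟩⟩
  have hmisses : {y ∈ z.powerset | ¬(x ∩ y).Nonempty} = (z \ x).powerset := by
    ext y
    simp only [mem_filter, mem_powerset, not_nonempty_iff_eq_empty, subset_sdiff,
      ← disjoint_iff_inter_eq_empty, disjoint_comm]
  have hsplit := sum_filter_add_sum_filter_not z.powerset (fun y => (x ∩ y).Nonempty)
    fun y => (-1 : ℚ) ^ #y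
  rw [hmisses, sum_powerset_neg_one_pow_card_eq_ite, sum_powerset_neg_one_pow_card_eq_ite,
    if_neg (nonempty_iff_ne_empty.1 (hG.nonempty z hz))] at hsplit
  rw [hmeets, sum_congr rfl fun y hy => neg_one_pow_card_sub_one
    ((mem_filter.1 hy).2.mono inter_subset_right), sum_neg_distrib]
  simp only [sdiff_eq_empty_iff_subset] at hsplit
  split_ifs at hsplit ⊢ <;> linarith

lemma sum_subset_eq_one (hG : IsSimplicialComplex G) {z : Finset V} (hz : z ∈ G) :
    ∑ y ∈ G with y ⊆ z, (-1 : ℚ) ^ (#y - 1) = 1 := by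
  have hmeets : {y ∈ G | y ⊆ z} = {y ∈ G | (z ∩ y).Nonempty ∧ y ⊆ z} :=
    filter_congr fun y hy =>
      ⟨fun hyz => ⟨by rw [inter_eq_right.2 hyz]; exact hG.nonempty y hy, hyz⟩, And.right⟩
  rw [hmeets, hG.sum_inter_nonempty_subset hz z, if_pos subset_rfl]

lemma sum_Icc (hG : IsSimplicialComplex G) {w x : Finset V} (hw : w ∈ G) (hx : x ∈ G) :
    ∑ z ∈ G with w ⊆ z ∧ z ⊆ x, (-1 : ℚ) ^ (#z - 1) = if w = x then (-1) ^ (#x - 1) else 0 := by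
  have hIcc : {z ∈ G | w ⊆ z ∧ z ⊆ x} = Icc w x := by
    ext z
    simp only [mem_filter, mem_Icc]
    exact ⟨And.right, fun h => ⟨hG.mem_of_subset x hx z h.2 ((hG.nonempty w hw).mono h.1), h⟩⟩
  rw [hIcc, sum_congr rfl fun z hz => neg_one_pow_card_sub_one
    ((hG.nonempty w hw).mono (mem_Icc.1 hz).1), sum_neg_distrib, sum_Icc_neg_one_pow_card,
    neg_one_pow_card_sub_one (hG.nonempty x hx)]
  split_ifs with h
  · rw [h]
  · exact neg_zero

/-- The matrix identity `L' ω ζ = ζᵀ`. -/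
lemma sum_inter_nonempty_mul_sum_superset (hG : IsSimplicialComplex G) (x : Finset V)
    (h : Finset V → ℚ) :
    ∑ y ∈ G with (x ∩ y).Nonempty, (-1 : ℚ) ^ (#y - 1) * ∑ z ∈ G with y ⊆ z, h z
      = ∑ z ∈ G with z ⊆ x, h z := by
  rw [sum_mul_sum_filter_comm, sum_filter]
  refine sum_congr rfl fun z hz => ?_
  rw [filter_filter, hG.sum_inter_nonempty_subset hz x]
  split_ifs <;> simp

lemma connMat_mul_green (hG : IsSimplicialComplex G) :
    connMat G * Matrix.of (fun x y : G => green G x y) = 1 := by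
  ext a w
  rw [Matrix.mul_apply, Matrix.one_apply]
  simp only [Matrix.of_apply]
  rw [sum_connMat_mul a (fun y => green G y w)]
  simp only [green_eq_mul_sum_superset (G := G) _ (w : Finset V)]
  rw [← mul_sum, hG.sum_inter_nonempty_mul_sum_superset, ← sum_filter, filter_filter,
    filter_congr fun z _ => and_comm, hG.sum_Icc w.2 a.2]
  by_cases h : a = w
  · rw [if_pos (congrArg Subtype.val h.symm), if_pos h, h, neg_one_pow_mul_neg_one_pow_self]
  · rw [if_neg fun h' => h (Subtype.ext h'.symm), if_neg h, mul_zero]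

lemma inv_connMat (hG : IsSimplicialComplex G) :
    (connMat G)⁻¹ = Matrix.of fun x y : G => green G x y :=
  Matrix.inv_eq_right_inv hG.connMat_mul_green

lemma sum_green (hG : IsSimplicialComplex G) (x : Finset V) :
    ∑ y ∈ G, green G x y = (-1) ^ (#x - 1) * green G x x := by
  simp only [green_comm (G := G) x, green_eq_mul_sum_superset (G := G) _ x]
  rw [← mul_sum, sum_mul_sum_filter_comm,
    sum_congr rfl fun z hz => by rw [hG.sum_subset_eq_one hz, one_mul], ← sum_filter,
    ← mul_assoc ((-1 : ℚ) ^ (#x - 1)), neg_one_pow_mul_neg_one_pow_self, one_mul, ← sum_filter,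
    filter_filter, filter_congr fun _ _ => and_self_iff]

end IsSimplicialComplex

end SimplicialComplex

theorem connMat_mulVec_Kplus_eq_one_general {V : Type*} [DecidableEq V]
    (G : Finset (Finset V))
    (hne : ∀ x ∈ G, x.Nonempty)
    (hsub : ∀ x ∈ G, ∀ y : Finset V, y ⊆ x → y.Nonempty → y ∈ G) :
    (∀ x : G, ∑ y : G, connMat G x y * Kplus G (y : Finset V) = 1) ∧
    (∀ x : G, ∑ y : G, (connMat G)⁻¹ x y
        = (-1 : ℚ) ^ ((x : Finset V).card - 1) * (connMat G)⁻¹ x x) := by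
  have hG : IsSimplicialComplex G := ⟨hne, hsub⟩
  refine ⟨fun x => ?_, fun x => ?_⟩
  · rw [sum_connMat_mul x (Kplus G), sum_congr rfl fun y hy => hG.Kplus_eq (mem_filter.1 hy).1,
      hG.sum_inter_nonempty_mul_sum_superset, hG.sum_subset_eq_one x.2]
  · simp only [hG.inv_connMat, Matrix.of_apply]
    rw [sum_coe_sort G (green G x), hG.sum_green x]

/-- `L' K⁺ = 1`; equivalently, the row sums of the Green function
satisfy `∑_y g(x,y) = (-1)^{dim x} g(x,x)`. -/
theorem connMat_mulVec_Kplus_eq_one {V : Type*} [DecidableEq V]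
    (G : Finset (Finset V))
    (hne : ∀ x ∈ G, x.Nonempty)
    (hsub : ∀ x ∈ G, ∀ y : Finset V, y ⊆ x → y.Nonempty → y ∈ G)
    (hinv : IsUnit (connMat G)) :
    (∀ x : G, ∑ y : G, connMat G x y * Kplus G (y : Finset V) = 1) ∧
    (∀ x : G, ∑ y : G, (connMat G)⁻¹ x y
        = (-1 : ℚ) ^ ((x : Finset V).card - 1) * (connMat G)⁻¹ x x) :=
  connMat_mulVec_Kplus_eq_one_general G hne hsub
end

section
/- Let G be a finite abstract simplicial complex and x a face. The unit sphere S(x) of x in the barycentric refinement G₁ is the join of the stable sphere S⁻(x) = {y : y ⊊ x} and the unstable sphere S⁺(x) = {y : x ⊊ y}, and consequently 1 - χ(S(x)) = (1 - χ(S⁻(x)))·(1 - χ(S⁺(x))). -/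
open Finset Matrix

/-- All chains in `S`, including the empty one. -/
def allChains {V : Type*} [DecidableEq V] (S : Finset (Finset V)) : Finset (Finset (Finset V)) :=
  S.powerset.filter (fun c => ∀ y ∈ c, ∀ z ∈ c, y ⊆ z ∨ z ⊆ y)

lemma one_sub_chainChi {V : Type*} [DecidableEq V] (S : Finset (Finset V)) :
    1 - chainChi S = ∑ c ∈ allChains S, (-1 : ℚ) ^ c.card := by
  classical
  rw [← Finset.sum_filter_add_sum_filter_not (allChains S) (fun c => c.Nonempty)]
  have h1 : (allChains S).filter (fun c => c.Nonempty)
      = S.powerset.filter (fun c => c.Nonempty ∧ ∀ y ∈ c, ∀ z ∈ c, y ⊆ z ∨ z ⊆ y) := by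
    simp [allChains, Finset.filter_filter, and_comm]
  have h2 : (allChains S).filter (fun c => ¬ c.Nonempty) = {∅} := by
    ext c
    simp only [allChains, Finset.mem_filter, Finset.mem_powerset, Finset.mem_singleton,
      Finset.not_nonempty_iff_eq_empty]
    constructor
    · rintro ⟨_, h⟩; exact h
    · rintro rfl; simp
  rw [h1, h2, Finset.sum_singleton]
  simp only [Finset.card_empty, pow_zero]
  have : ∑ c ∈ S.powerset.filter
      (fun c => c.Nonempty ∧ ∀ y ∈ c, ∀ z ∈ c, y ⊆ z ∨ z ⊆ y), (-1 : ℚ) ^ c.card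
      = - chainChi S := by
    rw [chainChi, ← Finset.sum_neg_distrib]
    refine Finset.sum_congr rfl ?_
    intro c hc
    simp only [Finset.mem_filter] at hc
    obtain ⟨k, hk⟩ : ∃ k, c.card = k + 1 :=
      ⟨c.card - 1, by have := Finset.card_pos.mpr hc.2.1; omega⟩
    rw [hk]
    simp [pow_succ]
  rw [this]; ring

lemma chains_join {V : Type*} [DecidableEq V] (A B : Finset (Finset V))
    (hd : Disjoint A B) (hAB : ∀ y ∈ A, ∀ z ∈ B, y ⊆ z) :
    ∑ c ∈ allChains (A ∪ B), (-1 : ℚ) ^ c.card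
      = (∑ a ∈ allChains A, (-1 : ℚ) ^ a.card) * (∑ b ∈ allChains B, (-1 : ℚ) ^ b.card) := by
  classical
  rw [Finset.sum_mul_sum, ← Finset.sum_product']
  refine Finset.sum_nbij' (fun c => (c ∩ A, c ∩ B)) (fun p => p.1 ∪ p.2) ?_ ?_ ?_ ?_ ?_
  · intro c hc
    simp only [allChains, Finset.mem_filter, Finset.mem_powerset] at hc
    simp only [Finset.mem_product, allChains, Finset.mem_filter, Finset.mem_powerset]
    refine ⟨⟨Finset.inter_subset_right, ?_⟩, Finset.inter_subset_right, ?_⟩ <;>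
      exact fun y hy z hz => hc.2 y (Finset.mem_of_mem_inter_left hy) z
        (Finset.mem_of_mem_inter_left hz)
  · intro p hp
    rw [Finset.mem_product] at hp
    obtain ⟨hpa, hpb⟩ := hp
    simp only [allChains, Finset.mem_filter, Finset.mem_powerset] at hpa hpb ⊢
    constructor
    · exact Finset.union_subset_union hpa.1 hpb.1
    · intro y hy z hz
      rcases Finset.mem_union.mp hy with hy | hy <;> rcases Finset.mem_union.mp hz with hz | hz
      · exact hpa.2 y hy z hz
      · exact Or.inl (hAB y (hpa.1 hy) z (hpb.1 hz))
      · exact Or.inr (hAB z (hpa.1 hz) y (hpb.1 hy))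
      · exact hpb.2 y hy z hz
  · intro c hc
    simp only [allChains, Finset.mem_filter, Finset.mem_powerset] at hc
    show c ∩ A ∪ c ∩ B = c
    rw [← Finset.inter_union_distrib_left, Finset.inter_eq_left.mpr hc.1]
  · intro p hp
    rw [Finset.mem_product] at hp
    obtain ⟨hpa, hpb⟩ := hp
    simp only [allChains, Finset.mem_filter, Finset.mem_powerset] at hpa hpb
    have h1 : (p.1 ∪ p.2) ∩ A = p.1 := by
      rw [Finset.union_inter_distrib_right, Finset.inter_eq_left.mpr hpa.1,
        Finset.disjoint_iff_inter_eq_empty.mp (Finset.disjoint_of_subset_left hpb.1 hd.symm),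
        Finset.union_empty]
    have h2 : (p.1 ∪ p.2) ∩ B = p.2 := by
      rw [Finset.union_inter_distrib_right, Finset.inter_eq_left.mpr hpb.1,
        Finset.disjoint_iff_inter_eq_empty.mp (Finset.disjoint_of_subset_left hpa.1 hd),
        Finset.empty_union]
    simp [h1, h2]
  · intro c hc
    simp only [allChains, Finset.mem_filter, Finset.mem_powerset] at hc
    have hdisj : Disjoint (c ∩ A) (c ∩ B) :=
      Finset.disjoint_of_subset_left Finset.inter_subset_right
        (Finset.disjoint_of_subset_right Finset.inter_subset_right hd)
    have : c = (c ∩ A) ∪ (c ∩ B) := by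
      rw [← Finset.inter_union_distrib_left, Finset.inter_eq_left.mpr hc.1]
    rw [show c.card = (c ∩ A).card + (c ∩ B).card by
      conv_lhs => rw [this]
      exact Finset.card_union_of_disjoint hdisj]
    rw [pow_add]

/-- the unit sphere `S(x)` in the barycentric refinement is the
Zykov join of the stable sphere `S⁻(x) = {y : y ⊊ x}` and the unstable sphere
`S⁺(x) = {y : x ⊊ y}`, and consequently
`1 - χ(S(x)) = (1 - χ(S⁻(x)))·(1 - χ(S⁺(x)))`. -/
theorem sphere_join_decomposition {V : Type*} [DecidableEq V]
    (G : Finset (Finset V))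
    (hne : ∀ x ∈ G, x.Nonempty)
    (hsub : ∀ x ∈ G, ∀ y : Finset V, y ⊆ x → y.Nonempty → y ∈ G)
    (x : Finset V) (hx : x ∈ G) :
    (G.filter (fun y => y ⊂ x ∨ x ⊂ y)
        = G.filter (fun y => y ⊂ x) ∪ G.filter (fun y => x ⊂ y)) ∧
    Disjoint (G.filter (fun y => y ⊂ x)) (G.filter (fun y => x ⊂ y)) ∧
    (∀ y ∈ G.filter (fun y => y ⊂ x), ∀ z ∈ G.filter (fun y => x ⊂ y), y ⊂ z) ∧
    1 - sphereChi G x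
      = (1 - chainChi (G.filter (fun y => y ⊂ x)))
        * (1 - chainChi (G.filter (fun y => x ⊂ y))) := by
  classical
  have hunion : G.filter (fun y => y ⊂ x ∨ x ⊂ y)
      = G.filter (fun y => y ⊂ x) ∪ G.filter (fun y => x ⊂ y) := Finset.filter_or _ _ _
  have hdisj : Disjoint (G.filter (fun y => y ⊂ x)) (G.filter (fun y => x ⊂ y)) := by
    rw [Finset.disjoint_left]
    intro a ha hb
    rw [Finset.mem_filter] at ha hb
    exact absurd hb.2 (not_lt_of_gt ha.2)
  have hcross : ∀ y ∈ G.filter (fun y => y ⊂ x), ∀ z ∈ G.filter (fun y => x ⊂ y), y ⊂ z := by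
    intro y hy z hz
    rw [Finset.mem_filter] at hy hz
    exact lt_trans hy.2 hz.2
  refine ⟨hunion, hdisj, hcross, ?_⟩
  rw [sphereChi, one_sub_chainChi, one_sub_chainChi, one_sub_chainChi, hunion]
  exact chains_join _ _ hdisj (fun y hy z hz => (hcross y hy z hz).subset)
end

section
/- The multiplicativity of i(H) = 1 - χ(H) under the Zykov join: for any two finite simple graphs A and B, 1 - χ(A + B) = (1 - χ(A))·(1 - χ(B)), where A + B is the join and χ is the Euler characteristic of the clique (Whitney) complex. -/
open Finset

open scoped Classical in
/-- The Euler characteristic of the clique (Whitney) complex of a finite simple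
graph: `χ(H) = ∑_{nonempty cliques c} (-1)^{|c|-1}`. -/
noncomputable def cliqueChi {W : Type*} [Fintype W] (H : SimpleGraph W) : ℚ :=
  ∑ c ∈ Finset.univ.filter
      (fun c : Finset W => c.Nonempty ∧ ∀ a ∈ c, ∀ b ∈ c, a ≠ b → H.Adj a b),
    (-1 : ℚ) ^ (c.card - 1)

/-- The (Zykov) join `A + B` of two graphs: disjoint union together with all
edges between vertices of `A` and vertices of `B`. -/
def graphJoin {α β : Type*} (A : SimpleGraph α) (B : SimpleGraph β) :
    SimpleGraph (α ⊕ β) where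
  Adj u v :=
    match u, v with
    | Sum.inl a, Sum.inl a' => A.Adj a a'
    | Sum.inr b, Sum.inr b' => B.Adj b b'
    | _, _ => True
  symm := by
    constructor
    rintro (a | b) (a' | b') h
    · exact A.adj_symm h
    · trivial
    · trivial
    · exact B.adj_symm h
  loopless := by
    constructor
    rintro (a | b) h
    · exact A.irrefl h
    · exact B.irrefl h

/-
Counting the empty clique turns `1 - χ(H)` into the signed count `∑_c (-1)^|c|` over all
cliques. A clique of `A + B` is exactly a disjoint union of a clique of `A` and a clique
of `B`, and `(-1)^|c|` is multiplicative under disjoint union, so the signed count of `A + B`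
factors as the product of those of `A` and `B`.
-/

namespace SimpleGraph

variable {V : Type*} [Fintype V]

open scoped Classical in
noncomputable def cliques (G : SimpleGraph V) : Finset (Finset V) :=
  {s | G.IsClique (s : Set V)}

open scoped Classical in
lemma one_sub_cliqueChi_eq_sum_cliques (G : SimpleGraph V) :
    1 - cliqueChi G = ∑ s ∈ G.cliques, (-1 : ℚ) ^ #s := by
  have hempty : ∅ ∈ G.cliques := by simp [cliques]
  have hnonempty : univ.filter
      (fun c : Finset V => c.Nonempty ∧ ∀ a ∈ c, ∀ b ∈ c, a ≠ b → G.Adj a b) =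
      G.cliques.erase ∅ := by
    ext s
    simp [cliques, isClique_iff, Set.Pairwise, nonempty_iff_ne_empty]
  rw [← add_sum_erase _ _ hempty, cliqueChi, hnonempty, card_empty, pow_zero, sub_eq_add_neg,
    ← sum_neg_distrib]
  congr 1
  refine sum_congr rfl fun s hs => ?_
  obtain ⟨n, hn⟩ := Nat.exists_eq_succ_of_ne_zero
    (card_ne_zero.mpr (nonempty_of_ne_empty (ne_of_mem_erase hs)))
  rw [hn, Nat.succ_sub_one, pow_succ]
  ring

end SimpleGraph

section Join

variable {α β : Type*} {A : SimpleGraph α} {B : SimpleGraph β}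

lemma isClique_graphJoin_iff {s : Set (α ⊕ β)} :
    (graphJoin A B).IsClique s ↔ A.IsClique (Sum.inl ⁻¹' s) ∧ B.IsClique (Sum.inr ⁻¹' s) := by
  refine ⟨fun h => ⟨fun a ha a' ha' hne => h ha ha' (Sum.inl_injective.ne hne),
    fun b hb b' hb' hne => h hb hb' (Sum.inr_injective.ne hne)⟩, ?_⟩
  rintro ⟨hA, hB⟩ (a | b) hu (a' | b') hv hne
  · exact hA hu hv (fun h => hne (congrArg Sum.inl h))
  · trivial
  · trivial
  · exact hB hu hv (fun h => hne (congrArg Sum.inr h))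

lemma mem_cliques_graphJoin [Fintype α] [Fintype β] {s : Finset (α ⊕ β)} :
    s ∈ (graphJoin A B).cliques ↔ s.toLeft ∈ A.cliques ∧ s.toRight ∈ B.cliques := by
  have hleft : (s.toLeft : Set α) = Sum.inl ⁻¹' (s : Set (α ⊕ β)) := by ext; simp
  have hright : (s.toRight : Set β) = Sum.inr ⁻¹' (s : Set (α ⊕ β)) := by ext; simp
  simp [SimpleGraph.cliques, isClique_graphJoin_iff, hleft, hright]

end Join

/-- the functional `i(H) = 1 - χ(H)` is multiplicative under the
Zykov join: `1 - χ(A + B) = (1 - χ(A))·(1 - χ(B))`. -/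
theorem one_sub_cliqueChi_join {α β : Type*} [Fintype α] [Fintype β]
    (A : SimpleGraph α) (B : SimpleGraph β) :
    1 - cliqueChi (graphJoin A B) = (1 - cliqueChi A) * (1 - cliqueChi B) := by
  simp only [SimpleGraph.one_sub_cliqueChi_eq_sum_cliques, sum_mul_sum, ← sum_product']
  refine sum_equiv sumEquiv.toEquiv (fun s => ?_) (fun s _ => ?_)
  · simp [mem_cliques_graphJoin]
  · rw [← pow_add]
    simp [card_toLeft_add_card_toRight]
end

section
/- For any finite abstract simplicial complex G and any face x, the degree of x in the connection graph G' satisfies d_{G'}(x) = Σ_{y ∈ B(x)} χ(S⁺(y)), where B(x) is the closed neighborhood of x in G' and S⁺(y) = {z ∈ G : y ⊊ z} is the unstable sphere of y, assuming the Gauss–Bonnet identity χ(S_{G'}(x)) = Σ_{y ∈ S_{G'}(x)} (-1)^{dim(y)} χ(S(y)) for the sphere S_{G'}(x). -/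
open Finset Matrix

/-- The Euler characteristic of the clique complex of the graph on the
collection `S` of faces in which two faces are adjacent iff they intersect
(the connection graph restricted to `S`). -/
def interChi {V : Type*} [DecidableEq V] (S : Finset (Finset V)) : ℚ :=
  ∑ c ∈ S.powerset.filter
      (fun c => c.Nonempty ∧ ∀ y ∈ c, ∀ z ∈ c, (y ∩ z).Nonempty),
    (-1 : ℚ) ^ (c.card - 1)

/- ---------------- auxiliary material ---------------- -/

section Aux

variable {V : Type*} [DecidableEq V]

lemma neg_one_pow_sub_one {n : ℕ} (hn : 1 ≤ n) : (-1 : ℚ) ^ n = -(-1 : ℚ) ^ (n - 1) := by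
  obtain ⟨k, rfl⟩ : ∃ k, n = k + 1 := ⟨n - 1, by omega⟩
  simp [pow_succ]

lemma sign_add_eq_zero {e e' : Finset (Finset V)} (he : e.Nonempty)
    (hc : e'.card = e.card + 1) :
    (-1 : ℚ) ^ (e.card - 1) + (-1 : ℚ) ^ (e'.card - 1) = 0 := by
  have h1 : 1 ≤ e.card := Finset.card_pos.mpr he
  have h2 : e'.card - 1 = e.card := by omega
  rw [h2, neg_one_pow_sub_one h1]
  ring

/-- In a nonempty chain of finsets, the `inf'` is a member and a lower bound. -/
lemma chain_inf'_mem {s : Finset (Finset V)} (h : s.Nonempty)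
    (hc : ∀ a ∈ s, ∀ b ∈ s, a ⊆ b ∨ b ⊆ a) :
    s.inf' h id ∈ s ∧ ∀ b ∈ s, s.inf' h id ⊆ b := by
  obtain ⟨m, hm, hmin⟩ := s.exists_min_image (fun a => a.card) h
  have hmle : ∀ b ∈ s, m ⊆ b := by
    intro b hb
    rcases hc m hm b hb with h1 | h1
    · exact h1
    · have : b = m := Finset.eq_of_subset_of_card_le h1 (hmin b hb)
      exact le_of_eq this.symm
  have heq : s.inf' h id = m :=
    le_antisymm (Finset.inf'_le id hm) (Finset.le_inf' h id hmle)
  rw [heq]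
  exact ⟨hm, hmle⟩

lemma inf'_set_congr {α β : Type*} [SemilatticeInf β] {s t : Finset α} (h : s = t)
    (hs : s.Nonempty) (f : α → β) : s.inf' hs f = t.inf' (h ▸ hs) f := by
  subst h; rfl

/-- The involution on chains: toggle `(min {z ∈ d | z ⊄ x}) ∩ x` if some element of the
chain is not contained in `x`, otherwise toggle `x` itself. -/
def toggle (x : Finset V) (d : Finset (Finset V)) : Finset (Finset V) :=
  if hF : (d.filter fun z => ¬ z ⊆ x).Nonempty then
    (if ((d.filter fun z => ¬ z ⊆ x).inf' hF id) ∩ x ∈ d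
     then d.erase (((d.filter fun z => ¬ z ⊆ x).inf' hF id) ∩ x)
     else insert (((d.filter fun z => ¬ z ⊆ x).inf' hF id) ∩ x) d)
  else if x ∈ d then d.erase x else insert x d

lemma toggle_facts (G : Finset (Finset V))
    (hsub : ∀ x ∈ G, ∀ y : Finset V, y ⊆ x → y.Nonempty → y ∈ G)
    (x : Finset V) (hx : x ∈ G) (hxne : x.Nonempty)
    (d : Finset (Finset V))
    (hdP : ∀ w ∈ d, w ∈ G ∧ (w ∩ x).Nonempty)
    (hch : ∀ a ∈ d, ∀ b ∈ d, a ⊆ b ∨ b ⊆ a)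
    (hdn : d.Nonempty) (hdx : d ≠ {x}) :
    (∀ w ∈ toggle x d, w ∈ G ∧ (w ∩ x).Nonempty) ∧
    (∀ a ∈ toggle x d, ∀ b ∈ toggle x d, a ⊆ b ∨ b ⊆ a) ∧
    (toggle x d).Nonempty ∧ toggle x d ≠ {x} ∧
    toggle x (toggle x d) = d ∧
    (-1 : ℚ) ^ (d.card - 1) + (-1 : ℚ) ^ ((toggle x d).card - 1) = 0 := by
  by_cases hF : (d.filter fun z => ¬ z ⊆ x).Nonempty
  · -- some element of the chain is not contained in x
    obtain ⟨hzF, hzmin⟩ := chain_inf'_mem hF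
      (fun a ha b hb => hch a (mem_filter.mp ha).1 b (mem_filter.mp hb).1)
    set z := (d.filter fun z => ¬ z ⊆ x).inf' hF id with hzdef
    rw [mem_filter] at hzF
    obtain ⟨hzd, hznx⟩ := hzF
    set a := z ∩ x with hadef
    have hax : a ⊆ x := inter_subset_right
    have hane : a.Nonempty := (hdP z hzd).2
    have haz : a ≠ z := fun h => hznx (h ▸ hax)
    have haG : a ∈ G := hsub z (hdP z hzd).1 a inter_subset_left hane
    have haxx : a ∩ x = a := by rw [hadef, inter_assoc, inter_self]
    have hcomp : ∀ w ∈ d, a ⊆ w ∨ w ⊆ a := by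
      intro w hw
      by_cases hwx : w ⊆ x
      · rcases hch w hw z hzd with h1 | h1
        · exact Or.inr (subset_inter h1 hwx)
        · exact Or.inl (inter_subset_left.trans h1)
      · exact Or.inl (inter_subset_left.trans (hzmin w (mem_filter.mpr ⟨hw, hwx⟩)))
    have hfins : ((insert a d).filter fun w => ¬ w ⊆ x) = d.filter fun w => ¬ w ⊆ x := by
      rw [Finset.filter_insert, if_neg (not_not_intro hax)]
    have hfera : ((d.erase a).filter fun w => ¬ w ⊆ x) = d.filter fun w => ¬ w ⊆ x := by
      rw [Finset.filter_erase, Finset.erase_eq_of_notMem]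
      intro hmem
      exact (mem_filter.mp hmem).2 hax
    have htog : toggle x d = if a ∈ d then d.erase a else insert a d := by
      rw [toggle, dif_pos hF]
    by_cases had : a ∈ d
    · -- erase case
      rw [htog, if_pos had]
      have hze : z ∈ d.erase a := mem_erase.mpr ⟨Ne.symm haz, hzd⟩
      have hern : (d.erase a).Nonempty := ⟨z, hze⟩
      refine ⟨?_, ?_, hern, ?_, ?_, ?_⟩
      · intro w hw; exact hdP w (mem_of_mem_erase hw)
      · intro u hu v hv; exact hch u (mem_of_mem_erase hu) v (mem_of_mem_erase hv)
      · intro h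
        apply hznx
        have hzx : z ∈ ({x} : Finset (Finset V)) := h ▸ hze
        rw [Finset.mem_singleton] at hzx
        rw [hzx]
      · -- toggle of the erase
        have hF' : ((d.erase a).filter fun w => ¬ w ⊆ x).Nonempty := by
          rw [hfera]; exact hF
        rw [toggle, dif_pos hF']
        have hzz : ((d.erase a).filter fun w => ¬ w ⊆ x).inf' hF' id = z :=
          inf'_set_congr hfera hF' id
        rw [hzz]
        rw [if_neg (Finset.notMem_erase a d)]
        exact Finset.insert_erase had
      · rw [add_comm]
        exact sign_add_eq_zero hern (by rw [Finset.card_erase_of_mem had]; have := Finset.card_pos.mpr hdn; omega)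
    · -- insert case
      rw [htog, if_neg had]
      refine ⟨?_, ?_, Finset.insert_nonempty _ _, ?_, ?_, ?_⟩
      · intro w hw
        rcases mem_insert.mp hw with h | h
        · subst h; exact ⟨haG, by rw [haxx]; exact hane⟩
        · exact hdP w h
      · intro u hu v hv
        rcases mem_insert.mp hu with h1 | h1 <;> rcases mem_insert.mp hv with h2 | h2
        · subst h1; subst h2; exact Or.inl (Finset.Subset.refl _)
        · subst h1; exact hcomp v h2
        · subst h2; exact (hcomp u h1).symm
        · exact hch u h1 v h2
      · intro h
        apply hznx
        have hzx : z ∈ ({x} : Finset (Finset V)) := h ▸ (mem_insert_of_mem hzd : z ∈ insert a d)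
        rw [Finset.mem_singleton] at hzx
        rw [hzx]
      · have hF' : ((insert a d).filter fun w => ¬ w ⊆ x).Nonempty := by
          rw [hfins]; exact hF
        rw [toggle, dif_pos hF']
        have hzz : ((insert a d).filter fun w => ¬ w ⊆ x).inf' hF' id = z :=
          inf'_set_congr hfins hF' id
        rw [hzz]
        rw [if_pos (mem_insert_self a d)]
        exact Finset.erase_insert had
      · exact sign_add_eq_zero hdn (Finset.card_insert_of_notMem had)
  · -- every element of the chain is contained in x
    have hall : ∀ w ∈ d, w ⊆ x := by
      intro w hw
      by_contra h
      exact hF ⟨w, mem_filter.mpr ⟨hw, h⟩⟩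
    have hFe : (d.filter fun z => ¬ z ⊆ x) = ∅ := by
      rw [Finset.filter_eq_empty_iff]
      intro w hw
      exact not_not_intro (hall w hw)
    have htog : toggle x d = if x ∈ d then d.erase x else insert x d := by
      rw [toggle, dif_neg hF]
    by_cases hxd : x ∈ d
    · -- erase x
      rw [htog, if_pos hxd]
      obtain ⟨w, hw, hwx⟩ : ∃ w ∈ d, w ≠ x := by
        by_contra h
        push_neg at h
        exact hdx (Finset.eq_singleton_iff_unique_mem.mpr ⟨hxd, h⟩)
      have hwe : w ∈ d.erase x := mem_erase.mpr ⟨hwx, hw⟩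
      have hern : (d.erase x).Nonempty := ⟨w, hwe⟩
      refine ⟨?_, ?_, hern, ?_, ?_, ?_⟩
      · intro u hu; exact hdP u (mem_of_mem_erase hu)
      · intro u hu v hv; exact hch u (mem_of_mem_erase hu) v (mem_of_mem_erase hv)
      · intro h
        exact (Finset.notMem_erase x d) (h ▸ Finset.mem_singleton_self x)
      · have hF' : ¬ ((d.erase x).filter fun z => ¬ z ⊆ x).Nonempty := by
          rw [Finset.filter_erase, hFe]
          simp
        rw [toggle, dif_neg hF']
        rw [if_neg (Finset.notMem_erase x d)]
        exact Finset.insert_erase hxd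
      · rw [add_comm]
        exact sign_add_eq_zero hern (by rw [Finset.card_erase_of_mem hxd]; have := Finset.card_pos.mpr hdn; omega)
    · -- insert x
      rw [htog, if_neg hxd]
      refine ⟨?_, ?_, Finset.insert_nonempty _ _, ?_, ?_, ?_⟩
      · intro w hw
        rcases mem_insert.mp hw with h | h
        · subst h; exact ⟨hx, by rw [inter_self]; exact hxne⟩
        · exact hdP w h
      · intro u hu v hv
        rcases mem_insert.mp hu with h1 | h1 <;> rcases mem_insert.mp hv with h2 | h2
        · subst h1; subst h2; exact Or.inl (Finset.Subset.refl _)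
        · subst h1; exact Or.inr (hall v h2)
        · subst h2; exact Or.inl (hall u h1)
        · exact hch u h1 v h2
      · intro h
        obtain ⟨w, hw⟩ := hdn
        have hwm : w ∈ insert x d := mem_insert_of_mem hw
        rw [h, Finset.mem_singleton] at hwm
        exact hxd (hwm ▸ hw)
      · have hF' : ¬ ((insert x d).filter fun z => ¬ z ⊆ x).Nonempty := by
          rw [Finset.filter_insert, if_neg (not_not_intro (Finset.Subset.refl x)), hFe]
          simp
        rw [toggle, dif_neg hF']
        rw [if_pos (mem_insert_self x d)]
        exact Finset.erase_insert hxd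
      · exact sign_add_eq_zero hdn (Finset.card_insert_of_notMem hxd)

/-- The order complex of `B(x) = {y ∈ G : y ∩ x ≠ ∅}` has Euler characteristic 1. -/
lemma chains_sum_eq_one (G : Finset (Finset V))
    (hne : ∀ x ∈ G, x.Nonempty)
    (hsub : ∀ x ∈ G, ∀ y : Finset V, y ⊆ x → y.Nonempty → y ∈ G)
    (x : Finset V) (hx : x ∈ G) :
    ∑ d ∈ (G.filter (fun y => (y ∩ x).Nonempty)).powerset.filter
        (fun c => c.Nonempty ∧ ∀ y ∈ c, ∀ z ∈ c, y ⊆ z ∨ z ⊆ y),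
      (-1 : ℚ) ^ (d.card - 1) = 1 := by
  have hxne : x.Nonempty := hne x hx
  set P := G.filter (fun y => (y ∩ x).Nonempty) with hPdef
  set C := P.powerset.filter
      (fun c => c.Nonempty ∧ ∀ y ∈ c, ∀ z ∈ c, y ⊆ z ∨ z ⊆ y) with hCdef
  have hxP : x ∈ P := mem_filter.mpr ⟨hx, by rw [inter_self]; exact hxne⟩
  have hxC : ({x} : Finset (Finset V)) ∈ C := by
    rw [hCdef, mem_filter, mem_powerset]
    refine ⟨singleton_subset_iff.mpr hxP, Finset.singleton_nonempty x, ?_⟩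
    intro y hy z hz
    rw [Finset.mem_singleton] at hy hz
    subst hy; subst hz; exact Or.inl (Finset.Subset.refl _)
  rw [← Finset.add_sum_erase _ _ hxC]
  have hmem : ∀ d ∈ C.erase {x},
      (∀ w ∈ d, w ∈ G ∧ (w ∩ x).Nonempty) ∧
      (∀ a ∈ d, ∀ b ∈ d, a ⊆ b ∨ b ⊆ a) ∧ d.Nonempty ∧ d ≠ {x} := by
    intro d hd
    rw [Finset.mem_erase, hCdef, mem_filter, mem_powerset] at hd
    obtain ⟨hdx, hdP, hdn, hdc⟩ := hd
    refine ⟨fun w hw => mem_filter.mp (hdP hw), hdc, hdn, hdx⟩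
  have h0 : ∑ d ∈ C.erase {x}, (-1 : ℚ) ^ (d.card - 1) = 0 := by
    have gmem : ∀ (d : Finset (Finset V)) (hd : d ∈ C.erase {x}),
        toggle x d ∈ C.erase {x} := by
      intro d hd
      obtain ⟨h1, h2, h3, h4⟩ := hmem d hd
      obtain ⟨t1, t2, t3, t4, _, _⟩ := toggle_facts G hsub x hx hxne d h1 h2 h3 h4
      rw [Finset.mem_erase, hCdef, mem_filter, mem_powerset]
      exact ⟨t4, fun w hw => mem_filter.mpr (t1 w hw), t3, t2⟩
    refine Finset.sum_involution (fun d _ => toggle x d) ?_ ?_ gmem ?_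
    · intro d hd
      obtain ⟨h1, h2, h3, h4⟩ := hmem d hd
      exact (toggle_facts G hsub x hx hxne d h1 h2 h3 h4).2.2.2.2.2
    · intro d hd _ heq
      obtain ⟨h1, h2, h3, h4⟩ := hmem d hd
      have hsgn := (toggle_facts G hsub x hx hxne d h1 h2 h3 h4).2.2.2.2.2
      have heq' : toggle x d = d := heq
      rw [heq'] at hsgn
      have : (-1 : ℚ) ^ (d.card - 1) = 0 := by linarith
      simpa using this
    · intro d hd
      obtain ⟨h1, h2, h3, h4⟩ := hmem d hd
      exact (toggle_facts G hsub x hx hxne d h1 h2 h3 h4).2.2.2.2.1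
  rw [h0]
  simp

end Aux

/-- `d_{G'}(x) = ∑_{y ∈ B(x)} χ(S⁺(y))`, assuming Gauss-Bonnet for
the unit sphere `S_{G'}(x)` in the connection graph. -/
theorem degree_eq_sum_unstable_chi {V : Type*} [DecidableEq V]
    (G : Finset (Finset V))
    (hne : ∀ x ∈ G, x.Nonempty)
    (hsub : ∀ x ∈ G, ∀ y : Finset V, y ⊆ x → y.Nonempty → y ∈ G)
    (x : Finset V) (hx : x ∈ G)
    (hGB : interChi (G.filter (fun y => y ≠ x ∧ (y ∩ x).Nonempty))
        = ∑ y ∈ G.filter (fun y => y ≠ x ∧ (y ∩ x).Nonempty),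
            (-1 : ℚ) ^ (y.card - 1) * sphereChi G y) :
    ((G.filter (fun y => y ≠ x ∧ (y ∩ x).Nonempty)).card : ℚ)
      = ∑ y ∈ G.filter (fun y => (y ∩ x).Nonempty),
          chainChi (G.filter (fun z => y ⊂ z)) := by
  clear hGB
  have hxne : x.Nonempty := hne x hx
  set P := G.filter (fun y => (y ∩ x).Nonempty) with hPdef
  set C := P.powerset.filter
      (fun c => c.Nonempty ∧ ∀ y ∈ c, ∀ z ∈ c, y ⊆ z ∨ z ⊆ y) with hCdef
  have hxP : x ∈ P := mem_filter.mpr ⟨hx, by rw [inter_self]; exact hxne⟩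
  -- the degree equals |P| - 1
  have hSP : G.filter (fun y => y ≠ x ∧ (y ∩ x).Nonempty) = P.erase x := by
    ext y
    rw [hPdef, Finset.mem_erase, mem_filter, mem_filter]
    tauto
  have hcard : (G.filter (fun y => y ≠ x ∧ (y ∩ x).Nonempty)).card + 1 = P.card := by
    rw [hSP, Finset.card_erase_of_mem hxP]
    have := Finset.card_pos.mpr ⟨x, hxP⟩
    omega
  -- split the chain sum into singletons and longer chains
  have hsplit : ∑ d ∈ C.filter (fun d => d.card = 1), (-1 : ℚ) ^ (d.card - 1)
      + ∑ d ∈ C.filter (fun d => ¬ d.card = 1), (-1 : ℚ) ^ (d.card - 1)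
      = ∑ d ∈ C, (-1 : ℚ) ^ (d.card - 1) :=
    Finset.sum_filter_add_sum_filter_not C _ _
  -- singleton chains ↔ P
  have hC1 : C.filter (fun d => d.card = 1) = P.image (fun y => {y}) := by
    ext d
    rw [mem_filter, hCdef, mem_filter, mem_powerset, Finset.mem_image]
    constructor
    · rintro ⟨⟨hdP, _, _⟩, hc1⟩
      obtain ⟨y, rfl⟩ := Finset.card_eq_one.mp hc1
      exact ⟨y, hdP (Finset.mem_singleton_self y), rfl⟩
    · rintro ⟨y, hy, rfl⟩
      refine ⟨⟨singleton_subset_iff.mpr hy, Finset.singleton_nonempty y, ?_⟩,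
        Finset.card_singleton y⟩
      intro u hu v hv
      rw [Finset.mem_singleton] at hu hv
      subst hu; subst hv; exact Or.inl (Finset.Subset.refl _)
  have hsum1 : ∑ d ∈ C.filter (fun d => d.card = 1), (-1 : ℚ) ^ (d.card - 1)
      = (P.card : ℚ) := by
    rw [hC1, Finset.sum_image (fun a _ b _ h => Finset.singleton_injective h)]
    simp
  -- longer chains ↔ pairs (y, chain above y)
  have hsum2 : ∑ y ∈ P, chainChi (G.filter (fun z => y ⊂ z))
      = - ∑ d ∈ C.filter (fun d => ¬ d.card = 1), (-1 : ℚ) ^ (d.card - 1) := by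
    simp only [chainChi]
    rw [Finset.sum_sigma' P
      (fun y => (G.filter (fun z => y ⊂ z)).powerset.filter
        (fun c => c.Nonempty ∧ ∀ u ∈ c, ∀ v ∈ c, u ⊆ v ∨ v ⊆ u))
      (fun _ c => (-1 : ℚ) ^ (c.card - 1))]
    rw [← Finset.sum_neg_distrib]
    refine Finset.sum_bij (fun p _ => insert p.1 p.2) ?_ ?_ ?_ ?_
    · -- maps into C₂
      rintro ⟨y, c⟩ hp
      obtain ⟨hyP, hc⟩ := Finset.mem_sigma.mp hp
      rw [Finset.mem_filter, Finset.mem_powerset] at hc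
      obtain ⟨hcsub, hcne, hcch⟩ := hc
      have hyx : (y ∩ x).Nonempty := (mem_filter.mp hyP).2
      show insert y c ∈ C.filter (fun d => ¬ d.card = 1)
      have hyc : y ∉ c := by
        intro h
        exact (mem_filter.mp (hcsub h)).2.ne rfl
      have hyx : (y ∩ x).Nonempty := (mem_filter.mp hyP).2
      rw [mem_filter, hCdef, mem_filter, mem_powerset]
      refine ⟨⟨?_, Finset.insert_nonempty _ _, ?_⟩, ?_⟩
      · intro w hw
        rcases mem_insert.mp hw with h | h
        · subst h; exact hyP
        · have hw' := mem_filter.mp (hcsub h)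
          refine mem_filter.mpr ⟨hw'.1, ?_⟩
          exact hyx.mono (Finset.inter_subset_inter hw'.2.subset (Finset.Subset.refl x))
      · intro u hu v hv
        rcases mem_insert.mp hu with h1 | h1 <;> rcases mem_insert.mp hv with h2 | h2
        · subst h1; subst h2; exact Or.inl (Finset.Subset.refl _)
        · subst h1; exact Or.inl (mem_filter.mp (hcsub h2)).2.subset
        · subst h2; exact Or.inr (mem_filter.mp (hcsub h1)).2.subset
        · exact hcch u h1 v h2
      · rw [Finset.card_insert_of_notMem hyc]
        have h0 : 0 < c.card := Finset.card_pos.mpr hcne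
        omega
    · -- injective
      rintro ⟨y, c⟩ hp ⟨y', c'⟩ hp' heq0
      have heq : insert y c = insert y' c' := heq0
      obtain ⟨_, hc⟩ := Finset.mem_sigma.mp hp
      obtain ⟨_, hc'⟩ := Finset.mem_sigma.mp hp'
      rw [Finset.mem_filter, Finset.mem_powerset] at hc hc'
      obtain ⟨hcsub, -, -⟩ := hc
      obtain ⟨hcsub', -, -⟩ := hc'
      have hyc : y ∉ c := fun h => (mem_filter.mp (hcsub h)).2.ne rfl
      have hyc' : y' ∉ c' := fun h => (mem_filter.mp (hcsub' h)).2.ne rfl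
      have hyy : y = y' := by
        by_contra hne'
        have h1 : y ∈ insert y' c' := heq ▸ mem_insert_self y c
        have h2 : y' ∈ insert y c := heq ▸ mem_insert_self y' c'
        rw [mem_insert] at h1 h2
        rcases h1 with h1 | h1
        · exact hne' h1
        rcases h2 with h2 | h2
        · exact hne' h2.symm
        have hy1 : y' ⊂ y := (mem_filter.mp (hcsub' h1)).2
        have hy2 : y ⊂ y' := (mem_filter.mp (hcsub h2)).2
        exact ssubset_irrefl y (hy2.trans hy1)
      subst hyy
      have hcc : c = c' := by
        have := congrArg (fun s => Finset.erase s y) heq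
        simpa [Finset.erase_insert hyc, Finset.erase_insert hyc'] using this
      subst hcc
      rfl
    · -- surjective
      intro d hd
      simp only [hCdef, Finset.mem_filter, Finset.mem_powerset] at hd
      obtain ⟨⟨hdP, hdn, hdc⟩, hc1⟩ := hd
      obtain ⟨hmm, hmin⟩ := chain_inf'_mem hdn hdc
      set m := d.inf' hdn id with hmdef
      have hmP : m ∈ P := hdP hmm
      have hcm : d.erase m ∈ (G.filter (fun z => m ⊂ z)).powerset.filter
          (fun c => c.Nonempty ∧ ∀ u ∈ c, ∀ v ∈ c, u ⊆ v ∨ v ⊆ u) := by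
        rw [mem_filter, mem_powerset]
        refine ⟨?_, ?_, ?_⟩
        · intro w hw
          rw [Finset.mem_erase] at hw
          refine mem_filter.mpr ⟨(mem_filter.mp (hdP hw.2)).1, ?_⟩
          exact lt_of_le_of_ne (hmin w hw.2) (Ne.symm hw.1)
        · have h2 : 2 ≤ d.card := by
            have := Finset.card_pos.mpr hdn
            omega
          rw [← Finset.card_pos, Finset.card_erase_of_mem hmm]
          omega
        · intro u hu v hv
          exact hdc u (mem_of_mem_erase hu) v (mem_of_mem_erase hv)
      refine ⟨⟨m, d.erase m⟩, Finset.mem_sigma.mpr ⟨hmP, hcm⟩, ?_⟩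
      show insert m (d.erase m) = d
      exact Finset.insert_erase hmm
    · -- values agree
      rintro ⟨y, c⟩ hp
      obtain ⟨-, hc⟩ := Finset.mem_sigma.mp hp
      rw [Finset.mem_filter, Finset.mem_powerset] at hc
      obtain ⟨hcsub, hcne, -⟩ := hc
      have hyc : y ∉ c := fun h => (mem_filter.mp (hcsub h)).2.ne rfl
      have h1 : 1 ≤ c.card := Finset.card_pos.mpr hcne
      show (-1 : ℚ) ^ (c.card - 1) = -(-1 : ℚ) ^ ((insert y c).card - 1)
      rw [Finset.card_insert_of_notMem hyc]
      have h2 : c.card + 1 - 1 = c.card := by omega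
      rw [h2, neg_one_pow_sub_one h1]
      ring
  -- put everything together
  have hone : ∑ d ∈ C, (-1 : ℚ) ^ (d.card - 1) = 1 :=
    chains_sum_eq_one G hne hsub x hx
  have hPc : (P.card : ℚ) = ((G.filter (fun y => y ≠ x ∧ (y ∩ x).Nonempty)).card : ℚ) + 1 := by
    rw [← hcard]; push_cast; ring
  linarith [hsplit, hsum1, hsum2, hone, hPc]
end

section
/- Minimizing the energy U(p) = Σ_{x,y} g(x,y) p(x) p(y) over probability vectors p (with g = (1+A')^{-1} symmetric and invertible), the Lagrange critical point with full support is p(x) = (1 + d(x))/Z, where d(x) is the degree of x in the connection graph G' and Z = Σ_x (1 + d(x)): i.e., this p satisfies 2 g p = λ·1 for some λ, with Σ_x p(x) = 1. -/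
open Finset Matrix

/-- The degree of the face `x` in the connection graph `G'`. -/
def connDeg {V : Type*} [DecidableEq V] (G : Finset (Finset V)) (x : Finset V) : ℕ :=
  (G.filter (fun y => y ≠ x ∧ (y ∩ x).Nonempty)).card

/-- the probability vector `p(x) = (1 + d(x))/Z` with
`Z = ∑_x (1 + d(x))` is the full-support Lagrange critical point of the energy
`U(p) = ∑ g(x,y) p(x) p(y)`: it sums to `1` and satisfies `2 g p = λ 1`. -/
theorem energy_minimizer_gibbs {V : Type*} [DecidableEq V]
    (G : Finset (Finset V)) (hG : G.Nonempty)
    (hne : ∀ x ∈ G, x.Nonempty)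
    (hsub : ∀ x ∈ G, ∀ y : Finset V, y ⊆ x → y.Nonempty → y ∈ G)
    (hinv : IsUnit (connMat G)) :
    (∑ x : G, ((1 + connDeg G x : ℚ) / ∑ z : G, (1 + connDeg G z : ℚ)) = 1) ∧
    ∃ lam : ℚ, ∀ x : G,
      2 * ∑ y : G, (connMat G)⁻¹ x y
            * ((1 + connDeg G y : ℚ) / ∑ z : G, (1 + connDeg G z : ℚ))
        = lam := by
  haveI : Nonempty G := ⟨⟨hG.choose, hG.choose_spec⟩⟩
  set Z : ℚ := ∑ z : G, (1 + connDeg G z : ℚ) with hZdef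
  have hZpos : 0 < Z := by
    refine Finset.sum_pos (fun z _ => by positivity) Finset.univ_nonempty
  -- key: row sums of connMat are 1 + degree
  have key : ∀ y : G, (1 + connDeg G y : ℚ) = ∑ z : G, connMat G y z := by
    intro y
    have h1 : ∑ z : G, connMat G y z
        = ∑ z ∈ G, (if ((y : Finset V) ∩ z).Nonempty then (1 : ℚ) else 0) := by
      rw [← Finset.sum_coe_sort G
        (fun z => if ((y : Finset V) ∩ z).Nonempty then (1 : ℚ) else 0)]
      rfl
    rw [h1, Finset.sum_boole]
    have hset : G.filter (fun z => ((y : Finset V) ∩ z).Nonempty)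
        = insert (y : Finset V)
            (G.filter (fun z => z ≠ (y : Finset V) ∧ (z ∩ (y : Finset V)).Nonempty)) := by
      ext z
      simp only [Finset.mem_filter, Finset.mem_insert]
      constructor
      · rintro ⟨hzG, hz⟩
        by_cases h : z = (y : Finset V)
        · exact Or.inl h
        · exact Or.inr ⟨hzG, h, by rwa [Finset.inter_comm]⟩
      · rintro (h | ⟨hzG, _, hz⟩)
        · rw [h]
          exact ⟨y.2, by simpa using hne _ y.2⟩
        · exact ⟨hzG, by rwa [Finset.inter_comm]⟩
    rw [hset, Finset.card_insert_of_notMem (by simp), connDeg]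
    push_cast
    ring
  -- the inverse times the degree vector is constant 1
  have hmul : (connMat G)⁻¹ * connMat G = 1 :=
    Matrix.nonsing_inv_mul (connMat G) ((Matrix.isUnit_iff_isUnit_det _).mp hinv)
  have hconst : ∀ x : G, ∑ y : G, (connMat G)⁻¹ x y * (1 + connDeg G y : ℚ) = 1 := by
    intro x
    calc ∑ y : G, (connMat G)⁻¹ x y * (1 + connDeg G y : ℚ)
        = ∑ y : G, (connMat G)⁻¹ x y * ∑ z : G, connMat G y z := by
          simp_rw [key]
      _ = ∑ z : G, ∑ y : G, (connMat G)⁻¹ x y * connMat G y z := by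
          simp_rw [Finset.mul_sum]
          rw [Finset.sum_comm]
      _ = ∑ z : G, ((connMat G)⁻¹ * connMat G) x z := by
          simp [Matrix.mul_apply]
      _ = 1 := by
          rw [hmul]
          simp [Matrix.one_apply]
  constructor
  · rw [← Finset.sum_div, div_eq_one_iff_eq (ne_of_gt hZpos)]
  · refine ⟨2 / Z, fun x => ?_⟩
    have : ∑ y : G, (connMat G)⁻¹ x y * ((1 + connDeg G y : ℚ) / Z)
        = (∑ y : G, (connMat G)⁻¹ x y * (1 + connDeg G y : ℚ)) / Z := by
      rw [Finset.sum_div]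
      exact Finset.sum_congr rfl (fun y _ => by ring)
    rw [this, hconst x]
    ring
end

section
/- For a finite abstract simplicial complex G with n faces and connection degrees d(x) in G', the minimal value of the energy U(p) = Σ_{x,y} g(x,y)p(x)p(y) at the interior critical point p(x) = (1+d(x))/Z equals 1/Z, where Z = Σ_x(1+d(x)) = |V(G')| + 2|E(G')|. -/
open Finset Matrix

/-- at the interior critical point `p(x) = (1 + d(x))/Z`, the
energy `U(p) = ∑ g(x,y) p(x) p(y)` equals `1/Z`, where
`Z = ∑_x (1 + d(x)) = |V(G')| + 2|E(G')|`. -/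
theorem energy_at_minimizer {V : Type*} [DecidableEq V]
    (G : Finset (Finset V)) (hG : G.Nonempty)
    (hne : ∀ x ∈ G, x.Nonempty)
    (hsub : ∀ x ∈ G, ∀ y : Finset V, y ⊆ x → y.Nonempty → y ∈ G)
    (hinv : IsUnit (connMat G)) :
    (∑ z : G, (1 + connDeg G z : ℚ))
      = (G.card : ℚ)
        + (((G ×ˢ G).filter
            (fun yz => yz.1 ≠ yz.2 ∧ (yz.1 ∩ yz.2).Nonempty)).card : ℚ) ∧
    (∑ x : G, ∑ y : G, (connMat G)⁻¹ x y
        * ((1 + connDeg G x : ℚ) / ∑ z : G, (1 + connDeg G z : ℚ))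
        * ((1 + connDeg G y : ℚ) / ∑ z : G, (1 + connDeg G z : ℚ)))
      = 1 / ∑ z : G, (1 + connDeg G z : ℚ) := by
  have hrow : ∀ x : G, (∑ y : G, connMat G x y) = 1 + (connDeg G x : ℚ) := by
    intro x
    have hxne : (x : Finset V).Nonempty := hne _ x.2
    have h1 : (∑ y : G, connMat G x y)
        = ((G.filter (fun y => ((x : Finset V) ∩ y).Nonempty)).card : ℚ) := by
      simp only [connMat, Finset.univ_eq_attach]
      rw [Finset.sum_attach G (fun y => if ((x:Finset V) ∩ y).Nonempty then (1:ℚ) else 0),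
        Finset.sum_boole]
    have h2 : G.filter (fun y => ((x : Finset V) ∩ y).Nonempty)
        = insert (x : Finset V) (G.filter (fun y => y ≠ (x:Finset V) ∧ (y ∩ (x:Finset V)).Nonempty)) := by
      ext y
      simp only [Finset.mem_filter, Finset.mem_insert]
      constructor
      · rintro ⟨hy, hxy⟩
        rcases eq_or_ne y (x : Finset V) with h | h
        · exact Or.inl h
        · exact Or.inr ⟨hy, h, by rwa [Finset.inter_comm]⟩
      · rintro (h | ⟨hy, h, hxy⟩)
        · subst h; exact ⟨x.2, by simpa using hxne⟩
        · exact ⟨hy, by rwa [Finset.inter_comm]⟩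
    have h3 : (x : Finset V) ∉ G.filter (fun y => y ≠ (x:Finset V) ∧ (y ∩ (x:Finset V)).Nonempty) := by
      simp
    rw [h1, h2, Finset.card_insert_of_notMem h3, connDeg]
    push_cast
    ring
  constructor
  · -- first part: Z = n + #pairs
    have hpair : (((G ×ˢ G).filter
        (fun yz => yz.1 ≠ yz.2 ∧ (yz.1 ∩ yz.2).Nonempty)).card : ℚ)
        = ∑ z : G, (connDeg G z : ℚ) := by
      rw [Finset.card_filter]
      push_cast
      rw [Finset.sum_product_right]
      rw [Finset.univ_eq_attach, ← Finset.sum_attach G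
        (fun z => ∑ y ∈ G, (if y ≠ z ∧ (y ∩ z).Nonempty then (1:ℚ) else 0))]
      apply Finset.sum_congr rfl
      intro z _
      rw [Finset.sum_boole, connDeg]
    rw [hpair, Finset.sum_add_distrib]
    simp [Finset.card_attach]
  · -- second part
    set Z : ℚ := ∑ z : G, (1 + connDeg G z : ℚ) with hZ
    have hGne : Nonempty {x // x ∈ G} := ⟨⟨hG.choose, hG.choose_spec⟩⟩
    have hZpos : 0 < Z := by
      apply Finset.sum_pos
      · intro i _; positivity
      · exact Finset.univ_nonempty
    have hdet : IsUnit (connMat G).det := (Matrix.isUnit_iff_isUnit_det _).mp hinv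
    have hLinv : (connMat G)⁻¹ * connMat G = 1 := Matrix.nonsing_inv_mul _ hdet
    have hcol : ∀ x : G, (∑ y : G, (connMat G)⁻¹ x y * (1 + connDeg G y : ℚ)) = 1 := by
      intro x
      calc (∑ y : G, (connMat G)⁻¹ x y * (1 + connDeg G y : ℚ))
          = ∑ y : G, (connMat G)⁻¹ x y * ∑ z : G, connMat G y z := by
            refine Finset.sum_congr rfl fun y _ => ?_
            rw [hrow y]
        _ = ∑ z : G, ∑ y : G, (connMat G)⁻¹ x y * connMat G y z := by
            simp_rw [Finset.mul_sum]; exact Finset.sum_comm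
        _ = ∑ z : G, ((connMat G)⁻¹ * connMat G) x z := by
            refine Finset.sum_congr rfl fun z _ => ?_
            rw [Matrix.mul_apply]
        _ = ∑ z : G, (1 : Matrix G G ℚ) x z := by rw [hLinv]
        _ = 1 := by simp [Matrix.one_apply]
    calc (∑ x : G, ∑ y : G, (connMat G)⁻¹ x y
            * ((1 + connDeg G x : ℚ) / Z) * ((1 + connDeg G y : ℚ) / Z))
        = ∑ x : G, ((1 + connDeg G x : ℚ) / Z) * (1/Z)
            * ∑ y : G, (connMat G)⁻¹ x y * (1 + connDeg G y : ℚ) := by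
          refine Finset.sum_congr rfl fun x _ => ?_
          rw [Finset.mul_sum]
          refine Finset.sum_congr rfl fun y _ => ?_
          ring
      _ = ∑ x : G, ((1 + connDeg G x : ℚ) / Z) * (1/Z) := by
          refine Finset.sum_congr rfl fun x _ => ?_
          rw [hcol x, mul_one]
      _ = (∑ x : G, (1 + connDeg G x : ℚ)) / Z * (1/Z) := by
          rw [Finset.sum_div, Finset.sum_mul]
      _ = 1 / Z := by
          rw [← hZ, div_self hZpos.ne']
          ring
end
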